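/- arXiv:1810.00435 — 8 statements merged into one kernel-verified Lean document; each statement's English description precedes it below -/
import Mathlib

section
/- Let λ : ℕ → ℂ and c : ℕ → ℂ be sequences such that the series ∑_{n=1}^∞ c_n e^{λ_n z} converges absolutely at every point z ∈ ℂ. Then the series converges uniformly on every compact subset of ℂ, and consequently its sum U(z) = ∑_{n=1}^∞ c_n e^{λ_n z} is an entire (everywhere complex-differentiable) function on ℂ. -/
open Complex Filter Topology

/-- If the series `∑ cₙ e^{λₙ z}` converges absolutely at every point of `ℂ`,
then it converges uniformly on every compact subset of `ℂ` and its sum is an entire function. -/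
theorem sum_of_exponential_series_entire (lam c : ℕ → ℂ)
    (hconv : ∀ z : ℂ, Summable fun n => ‖c n‖ * Real.exp ((lam n * z).re)) :
    (∀ K : Set ℂ, IsCompact K →
      TendstoUniformlyOn (fun N z => ∑ n ∈ Finset.range N, c n * Complex.exp (lam n * z))
        (fun z => ∑' n, c n * Complex.exp (lam n * z)) atTop K) ∧
    Differentiable ℂ (fun z => ∑' n, c n * Complex.exp (lam n * z)) := by
  have key : ∀ K : Set ℂ, IsCompact K →
      TendstoUniformlyOn (fun N z => ∑ n ∈ Finset.range N, c n * Complex.exp (lam n * z))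
        (fun z => ∑' n, c n * Complex.exp (lam n * z)) atTop K := by
    intro K hK
    obtain ⟨R, hR⟩ := hK.isBounded.subset_closedBall 0
    set w1 : ℂ := ⟨R, R⟩
    set w2 : ℂ := ⟨R, -R⟩
    set w3 : ℂ := ⟨-R, R⟩
    set w4 : ℂ := ⟨-R, -R⟩
    apply tendstoUniformlyOn_tsum_nat
      (u := fun n => ‖c n‖ * (Real.exp ((lam n * w1).re) + Real.exp ((lam n * w2).re)
        + Real.exp ((lam n * w3).re) + Real.exp ((lam n * w4).re)))
    · have := (((hconv w1).add (hconv w2)).add (hconv w3)).add (hconv w4)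
      simpa [mul_add, add_assoc] using this
    · intro n z hz
      have hz' : ‖z‖ ≤ R := by simpa using hR hz
      have hre : |z.re| ≤ R := (Complex.abs_re_le_norm z).trans hz'
      have him : |z.im| ≤ R := (Complex.abs_im_le_norm z).trans hz'
      have h1 : (lam n).re * z.re ≤ |(lam n).re| * R := by
        calc (lam n).re * z.re ≤ |(lam n).re * z.re| := le_abs_self _
        _ = |(lam n).re| * |z.re| := abs_mul _ _
        _ ≤ |(lam n).re| * R := by
            exact mul_le_mul_of_nonneg_left hre (abs_nonneg _)
      have h2 : -((lam n).im * z.im) ≤ |(lam n).im| * R := by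
        calc -((lam n).im * z.im) ≤ |(lam n).im * z.im| := neg_le_abs _
        _ = |(lam n).im| * |z.im| := abs_mul _ _
        _ ≤ |(lam n).im| * R := mul_le_mul_of_nonneg_left him (abs_nonneg _)
      have hmain : Real.exp ((lam n * z).re)
          ≤ Real.exp ((lam n * w1).re) + Real.exp ((lam n * w2).re)
            + Real.exp ((lam n * w3).re) + Real.exp ((lam n * w4).re) := by
        have hle : (lam n * z).re ≤ |(lam n).re| * R + |(lam n).im| * R := by
          rw [Complex.mul_re]
          linarith
        have hx : ∃ w ∈ ({w1, w2, w3, w4} : Set ℂ),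
            |(lam n).re| * R + |(lam n).im| * R = (lam n * w).re := by
          rcases le_or_gt 0 (lam n).re with h | h <;>
            rcases le_or_gt 0 (lam n).im with h' | h'
          · exact ⟨w2, by simp, by simp [Complex.mul_re, w2, _root_.abs_of_nonneg h, _root_.abs_of_nonneg h']; try ring⟩
          · exact ⟨w1, by simp, by simp [Complex.mul_re, w1, _root_.abs_of_nonneg h, _root_.abs_of_neg h']; try ring⟩
          · exact ⟨w4, by simp, by simp [Complex.mul_re, w4, _root_.abs_of_neg h, _root_.abs_of_nonneg h']; try ring⟩
          · exact ⟨w3, by simp, by simp [Complex.mul_re, w3, _root_.abs_of_neg h, _root_.abs_of_neg h']; try ring⟩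
        obtain ⟨w, hw, hweq⟩ := hx
        have : Real.exp ((lam n * z).re) ≤ Real.exp ((lam n * w).re) :=
          Real.exp_le_exp.mpr (hweq ▸ hle)
        have e1 := (Real.exp_pos ((lam n * w1).re)).le
        have e2 := (Real.exp_pos ((lam n * w2).re)).le
        have e3 := (Real.exp_pos ((lam n * w3).re)).le
        have e4 := (Real.exp_pos ((lam n * w4).re)).le
        rcases hw with rfl | rfl | rfl | rfl <;> linarith
      calc ‖c n * Complex.exp (lam n * z)‖ = ‖c n‖ * Real.exp ((lam n * z).re) := by
            rw [norm_mul, Complex.norm_exp]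
      _ ≤ _ := mul_le_mul_of_nonneg_left hmain (norm_nonneg _)
  refine ⟨key, ?_⟩
  have hloc : TendstoLocallyUniformlyOn
      (fun N z => ∑ n ∈ Finset.range N, c n * Complex.exp (lam n * z))
      (fun z => ∑' n, c n * Complex.exp (lam n * z)) atTop Set.univ := by
    rw [tendstoLocallyUniformlyOn_iff_forall_isCompact isOpen_univ]
    exact fun K _ hK => key K hK
  have hdiff : DifferentiableOn ℂ (fun z => ∑' n, c n * Complex.exp (lam n * z)) Set.univ := by
    apply hloc.differentiableOn ?_ isOpen_univ
    filter_upwards with N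
    apply DifferentiableOn.mono ?_ (Set.subset_univ _)
    apply Differentiable.differentiableOn
    apply Differentiable.fun_sum
    intro n _
    exact (differentiable_const _).mul ((Complex.differentiable_exp).comp
      ((differentiable_const _).mul differentiable_id))
  exact differentiableOn_univ.mp hdiff
end

section
/- Let s_ω ∈ ℂ with |s_ω| = 1, and let λ : ℕ → ℂ satisfy |λ_n| → ∞ and λ_n/|λ_n| → s_ω as n → ∞. Let c : ℕ → ℂ and μ ∈ ℂ, and suppose there exists ε > 0 such that ∑_{n=1}^∞ |c_n| e^{Re(λ_n z)} < ∞ for every z with |z − μ| < ε. Then ∑_{n=1}^∞ |c_n| e^{Re(λ_n z)} < ∞ for every z in the half-plane Π(s_ω, μ) = {z ∈ ℂ : Re(s_ω z) < Re(s_ω μ)} (Abel-type theorem for series of exponentials with a unique limit direction of exponents). -/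
open Complex Filter Topology

/-- **Abel-type theorem.** If the exponents `λₙ` tend to infinity with the unique
limit direction `s_ω`, and the exponential series converges absolutely in a neighborhood of a
point `μ`, then it converges absolutely in the half-plane `{z : Re(s_ω z) < Re(s_ω μ)}`. -/
theorem abel_theorem_for_exponential_series (sω : ℂ) (hs : ‖sω‖ = 1) (lam : ℕ → ℂ)
    (hlam : Tendsto (fun n => ‖lam n‖) atTop atTop)
    (hdir : Tendsto (fun n => lam n / (‖lam n‖ : ℂ)) atTop (𝓝 sω))
    (c : ℕ → ℂ) (μ : ℂ) (ε : ℝ) (hε : 0 < ε)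
    (hconv : ∀ z : ℂ, ‖z - μ‖ < ε → Summable fun n => ‖c n‖ * Real.exp ((lam n * z).re)) :
    ∀ z : ℂ, (sω * z).re < (sω * μ).re →
      Summable fun n => ‖c n‖ * Real.exp ((lam n * z).re) := by
  intro z hz
  set d := (sω * μ).re - (sω * z).re with hd
  have hdpos : 0 < d := sub_pos.mpr hz
  set δ := min (ε / 2) (d / 2) with hδdef
  have hδpos : 0 < δ := lt_min (by linarith) (by linarith)
  set z' := μ - (δ : ℂ) * (starRingEnd ℂ) sω with hz'def
  have hz'near : ‖z' - μ‖ < ε := by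
    have h1 : z' - μ = -((δ : ℂ) * (starRingEnd ℂ) sω) := by rw [hz'def]; ring
    have : ‖z' - μ‖ = δ := by
      rw [h1, norm_neg, norm_mul, RCLike.norm_conj, hs, mul_one,
        Complex.norm_real, Real.norm_of_nonneg hδpos.le]
    rw [this]
    calc δ ≤ ε / 2 := min_le_left _ _
      _ < ε := by linarith
  have hg := hconv z' hz'near
  have hss : sω * (starRingEnd ℂ) sω = 1 := by
    rw [Complex.mul_conj, Complex.normSq_eq_norm_sq]
    norm_cast
    rw [hs]; norm_num
  have hre : (sω * z').re = (sω * μ).re - δ := by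
    have : sω * z' = sω * μ - (δ : ℂ) := by
      rw [hz'def]; linear_combination (-(δ : ℂ)) * hss
    rw [this, Complex.sub_re, Complex.ofReal_re]
  have hw : (sω * (z - z')).re < 0 := by
    rw [mul_sub, Complex.sub_re, hre]
    have : δ ≤ d / 2 := min_le_right _ _
    simp only [hd] at *
    linarith
  have h1 : ∀ᶠ n in atTop, (0 : ℝ) < ‖lam n‖ := hlam.eventually_gt_atTop 0
  have h2 : ∀ᶠ n in atTop, ((lam n / (‖lam n‖ : ℂ)) * (z - z')).re < 0 := by
    have ht : Tendsto (fun n => ((lam n / (‖lam n‖ : ℂ)) * (z - z')).re) atTop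
        (𝓝 ((sω * (z - z')).re)) :=
      (Complex.continuous_re.tendsto _).comp (hdir.mul tendsto_const_nhds)
    exact ht.eventually_lt_const hw |>.mono (fun n h => h)
  have hle : ∀ᶠ n in atTop,
      ‖c n‖ * Real.exp ((lam n * z).re) ≤ ‖c n‖ * Real.exp ((lam n * z').re) := by
    filter_upwards [h1, h2] with n hn1 hn2
    have key : (lam n * (z - z')).re ≤ 0 := by
      have hne : (‖lam n‖ : ℂ) ≠ 0 := by exact_mod_cast hn1.ne'
      have heq : lam n * (z - z') = (‖lam n‖ : ℂ) * ((lam n / (‖lam n‖ : ℂ)) * (z - z')) := by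
        rw [← mul_assoc, mul_comm (‖lam n‖ : ℂ), div_mul_cancel₀ _ hne]
      rw [heq, Complex.re_ofReal_mul]
      exact mul_nonpos_of_nonneg_of_nonpos hn1.le hn2.le
    have hzz : (lam n * z).re ≤ (lam n * z').re := by
      rw [mul_sub, Complex.sub_re] at key; linarith
    exact mul_le_mul_of_nonneg_left (Real.exp_le_exp.2 hzz) (norm_nonneg _)
  obtain ⟨N, hN⟩ := eventually_atTop.mp hle
  refine (summable_nat_add_iff N).mp ?_
  exact Summable.of_nonneg_of_le (fun n => by positivity)
    (fun n => hN (n + N) (Nat.le_add_left _ _)) ((summable_nat_add_iff N).mpr hg)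
end

section
/- Let s_ω ∈ ℂ with |s_ω| = 1, let λ : ℕ → ℂ satisfy |λ_n| → ∞ and λ_n/|λ_n| → s_ω, let c : ℕ → ℂ, and let μ : ℕ → ℂ be a sequence of points. Suppose that for every k there exists ε_k > 0 such that ∑_{n=1}^∞ |c_n| e^{Re(λ_n z)} < ∞ for all z with |z − μ_k| < ε_k. Set d = sup_k Re(s_ω μ_k) ∈ (−∞, +∞]. Then ∑_{n=1}^∞ |c_n| e^{Re(λ_n z)} < ∞ for every z with Re(s_ω z) < d, and the sum U(z) = ∑_{n=1}^∞ c_n e^{λ_n z} is holomorphic on the domain Π = {z ∈ ℂ : Re(s_ω z) < d} (equal to all of ℂ when d = +∞). -/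
open Complex Filter Topology

private lemma re_le_norm' (z : ℂ) : z.re ≤ ‖z‖ :=
  Complex.re_le_norm z

/-- Key estimate: if `Re(sω z) ≤ Re(sω w) - δ` and `‖z - w‖ ≤ M` uniformly on `S`,
then eventually `Re(lam n * z) ≤ Re(lam n * w)` for all `z ∈ S`. -/
private lemma eventually_re_le (sω : ℂ) (lam : ℕ → ℂ)
    (hlam : Tendsto (fun n => ‖lam n‖) atTop atTop)
    (hdir : Tendsto (fun n => lam n / (‖lam n‖ : ℂ)) atTop (𝓝 sω))
    (w : ℂ) (δ M : ℝ) (hδ : 0 < δ) (hM : 0 ≤ M) (S : Set ℂ)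
    (hSle : ∀ z ∈ S, (sω * z).re ≤ (sω * w).re - δ)
    (hSM : ∀ z ∈ S, ‖z - w‖ ≤ M) :
    ∀ᶠ n in atTop, ∀ z ∈ S, (lam n * z).re ≤ (lam n * w).re := by
  have hε : 0 < δ / (2 * (M + 1)) := by positivity
  have h1 : ∀ᶠ n in atTop, dist (lam n / (‖lam n‖ : ℂ)) sω < δ / (2 * (M + 1)) :=
    Metric.tendsto_nhds.mp hdir _ hε
  have h2 : ∀ᶠ n in atTop, (0:ℝ) < ‖lam n‖ := hlam.eventually (eventually_gt_atTop 0)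
  filter_upwards [h1, h2] with n hn1 hn2 z hz
  set u : ℂ := lam n / (‖lam n‖ : ℂ) with hu
  have hne : (‖lam n‖ : ℂ) ≠ 0 := by
    simpa using hn2.ne'
  have hlamn : lam n = (‖lam n‖ : ℂ) * u := by
    rw [hu, mul_div_cancel₀ _ hne]
  -- reduce to Re(lam n * (z - w)) ≤ 0
  have key : (lam n * (z - w)).re ≤ 0 := by
    have hsplit : u * (z - w) = sω * (z - w) + (u - sω) * (z - w) := by ring
    have h3 : (u * (z - w)).re ≤ -δ + (δ / (2 * (M + 1))) * M := by
      have e1 : (sω * (z - w)).re ≤ -δ := by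
        have := hSle z hz
        have : (sω * (z - w)).re = (sω * z).re - (sω * w).re := by
          rw [mul_sub, Complex.sub_re]
        linarith [hSle z hz, this]
      have e2 : ((u - sω) * (z - w)).re ≤ (δ / (2 * (M + 1))) * M := by
        calc ((u - sω) * (z - w)).re ≤ ‖(u - sω) * (z - w)‖ := re_le_norm' _
          _ = ‖u - sω‖ * ‖z - w‖ := norm_mul _ _
          _ ≤ (δ / (2 * (M + 1))) * M := by
              apply mul_le_mul (le_of_lt (by rwa [dist_eq_norm] at hn1)) (hSM z hz)
                (norm_nonneg _) (le_of_lt hε)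
      calc (u * (z - w)).re = (sω * (z - w)).re + ((u - sω) * (z - w)).re := by
            rw [hsplit, Complex.add_re]
        _ ≤ -δ + (δ / (2 * (M + 1))) * M := add_le_add e1 e2
    have h4 : (δ / (2 * (M + 1))) * M ≤ δ / 2 := by
      rw [div_mul_eq_mul_div, div_le_div_iff₀ (by positivity) (by norm_num)]
      nlinarith
    have h5 : (u * (z - w)).re ≤ 0 := by linarith
    have : (lam n * (z - w)).re = ‖lam n‖ * (u * (z - w)).re := by
      conv_lhs => rw [hlamn]
      rw [mul_assoc, Complex.re_ofReal_mul]
    rw [this]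
    exact mul_nonpos_of_nonneg_of_nonpos (norm_nonneg _) h5
  have : (lam n * (z - w)).re = (lam n * z).re - (lam n * w).re := by
    rw [mul_sub, Complex.sub_re]
  linarith

/-- Uniform summable bound on a set `S`. -/
private lemma exists_summable_bound (sω : ℂ) (lam : ℕ → ℂ)
    (hlam : Tendsto (fun n => ‖lam n‖) atTop atTop)
    (hdir : Tendsto (fun n => lam n / (‖lam n‖ : ℂ)) atTop (𝓝 sω))
    (c : ℕ → ℂ) (w : ℂ)
    (hw : Summable fun n => ‖c n‖ * Real.exp ((lam n * w).re))
    (δ M R : ℝ) (hδ : 0 < δ) (hM : 0 ≤ M) (hR : 0 ≤ R) (S : Set ℂ)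
    (hSle : ∀ z ∈ S, (sω * z).re ≤ (sω * w).re - δ)
    (hSM : ∀ z ∈ S, ‖z - w‖ ≤ M)
    (hSR : ∀ z ∈ S, ‖z‖ ≤ R) :
    ∃ u : ℕ → ℝ, Summable u ∧
      ∀ n, ∀ z ∈ S, ‖c n‖ * Real.exp ((lam n * z).re) ≤ u n := by
  obtain ⟨N, hN⟩ := eventually_atTop.mp
    (eventually_re_le sω lam hlam hdir w δ M hδ hM S hSle hSM)
  refine ⟨fun n => ‖c n‖ * Real.exp ((lam n * w).re) +
      (if n < N then ‖c n‖ * Real.exp (‖lam n‖ * R) else 0), ?_, ?_⟩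
  · apply hw.add
    apply summable_of_ne_finset_zero (s := Finset.range N)
    intro n hn
    simp only [Finset.mem_range] at hn
    simp [hn]
  · intro n z hz
    rcases lt_or_ge n N with h | h
    · have : (lam n * z).re ≤ ‖lam n‖ * R := by
        calc (lam n * z).re ≤ ‖lam n * z‖ := re_le_norm' _
          _ = ‖lam n‖ * ‖z‖ := norm_mul _ _
          _ ≤ ‖lam n‖ * R := by
              exact mul_le_mul_of_nonneg_left (hSR z hz) (norm_nonneg _)
      have h1 : ‖c n‖ * Real.exp ((lam n * z).re) ≤ ‖c n‖ * Real.exp (‖lam n‖ * R) :=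
        mul_le_mul_of_nonneg_left (Real.exp_le_exp.mpr this) (norm_nonneg _)
      have h2 : (0:ℝ) ≤ ‖c n‖ * Real.exp ((lam n * w).re) := by positivity
      simp only [if_pos h]
      linarith
    · have h1 : ‖c n‖ * Real.exp ((lam n * z).re) ≤ ‖c n‖ * Real.exp ((lam n * w).re) :=
        mul_le_mul_of_nonneg_left (Real.exp_le_exp.mpr (hN n h z hz)) (norm_nonneg _)
      simp only [if_neg (not_lt.mpr h)]
      linarith

/-- If the exponents `λₙ` tend to infinity with the unique limit direction
`s_ω` and the exponential series converges absolutely in a neighborhood of each point `μ_k`,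
then it converges absolutely at every `z` with `Re(s_ω z) < d = sup_k Re(s_ω μ_k) ∈ (−∞, +∞]`,
and its sum is holomorphic on the domain `Π = {z : Re(s_ω z) < d}`. -/
theorem exponential_series_converges_in_halfplane (sω : ℂ) (hs : ‖sω‖ = 1) (lam : ℕ → ℂ)
    (hlam : Tendsto (fun n => ‖lam n‖) atTop atTop)
    (hdir : Tendsto (fun n => lam n / (‖lam n‖ : ℂ)) atTop (𝓝 sω))
    (c : ℕ → ℂ) (μ : ℕ → ℂ)
    (hconv : ∀ k : ℕ, ∃ ε > 0, ∀ z : ℂ, ‖z - μ k‖ < ε →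
      Summable fun n => ‖c n‖ * Real.exp ((lam n * z).re)) :
    (∀ z : ℂ, ((sω * z).re : EReal) < ⨆ k, ((sω * μ k).re : EReal) →
      Summable fun n => ‖c n‖ * Real.exp ((lam n * z).re)) ∧
    DifferentiableOn ℂ (fun z => ∑' n, c n * Complex.exp (lam n * z))
      {z : ℂ | ((sω * z).re : EReal) < ⨆ k, ((sω * μ k).re : EReal)} := by
  have hμsum : ∀ k, Summable fun n => ‖c n‖ * Real.exp ((lam n * μ k).re) := by
    intro k
    obtain ⟨ε, hε, h⟩ := hconv k
    exact h (μ k) (by simpa using hε)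
  constructor
  · intro z hz
    rw [lt_iSup_iff] at hz
    obtain ⟨k, hk⟩ := hz
    rw [EReal.coe_lt_coe_iff] at hk
    set δ := (sω * μ k).re - (sω * z).re with hδdef
    have hδ : 0 < δ := sub_pos.mpr hk
    obtain ⟨u, hu, hub⟩ := exists_summable_bound sω lam hlam hdir c (μ k) (hμsum k)
      δ ‖z - μ k‖ ‖z‖ hδ (norm_nonneg _) (norm_nonneg _) {z}
      (by rintro _ rfl; simp [hδdef]) (by rintro _ rfl; simp) (by rintro _ rfl; simp)
    exact Summable.of_nonneg_of_le (fun n => by positivity)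
      (fun n => hub n z rfl) hu
  · intro z₀ hz₀
    rw [Set.mem_setOf_eq, lt_iSup_iff] at hz₀
    obtain ⟨k, hk⟩ := hz₀
    rw [EReal.coe_lt_coe_iff] at hk
    set g := (sω * μ k).re - (sω * z₀).re with hgdef
    have hg : 0 < g := sub_pos.mpr hk
    set r := g / 2 with hrdef
    have hr : 0 < r := by positivity
    have hSle : ∀ z ∈ Metric.closedBall z₀ r, (sω * z).re ≤ (sω * μ k).re - g / 2 := by
      intro z hz
      have h1 : (sω * (z - z₀)).re ≤ ‖z - z₀‖ := by
        calc (sω * (z - z₀)).re ≤ ‖sω * (z - z₀)‖ := re_le_norm' _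
          _ = ‖sω‖ * ‖z - z₀‖ := norm_mul _ _
          _ = ‖z - z₀‖ := by rw [hs, one_mul]
      have h2 : ‖z - z₀‖ ≤ r := by
        rwa [Metric.mem_closedBall, dist_eq_norm] at hz
      have h3 : (sω * z).re = (sω * z₀).re + (sω * (z - z₀)).re := by
        rw [mul_sub, Complex.sub_re]; ring
      rw [h3]
      have : (sω * z₀).re = (sω * μ k).re - g := by rw [hgdef]; ring
      rw [this]
      have h2' : ‖z - z₀‖ ≤ g / 2 := h2
      linarith
    have hSM : ∀ z ∈ Metric.closedBall z₀ r, ‖z - μ k‖ ≤ ‖z₀ - μ k‖ + r := by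
      intro z hz
      rw [Metric.mem_closedBall, dist_eq_norm] at hz
      calc ‖z - μ k‖ = ‖(z - z₀) + (z₀ - μ k)‖ := by ring_nf
        _ ≤ ‖z - z₀‖ + ‖z₀ - μ k‖ := norm_add_le _ _
        _ ≤ ‖z₀ - μ k‖ + r := by linarith
    have hSR : ∀ z ∈ Metric.closedBall z₀ r, ‖z‖ ≤ ‖z₀‖ + r := by
      intro z hz
      rw [Metric.mem_closedBall, dist_eq_norm] at hz
      calc ‖z‖ = ‖(z - z₀) + z₀‖ := by ring_nf
        _ ≤ ‖z - z₀‖ + ‖z₀‖ := norm_add_le _ _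
        _ ≤ ‖z₀‖ + r := by linarith
    obtain ⟨u, hu, hub⟩ := exists_summable_bound sω lam hlam hdir c (μ k) (hμsum k)
      (g / 2) (‖z₀ - μ k‖ + r) (‖z₀‖ + r) (by positivity) (by positivity) (by positivity)
      (Metric.closedBall z₀ r) hSle hSM hSR
    have hdiff : DifferentiableOn ℂ (fun z => ∑' n, c n * Complex.exp (lam n * z))
        (Metric.ball z₀ r) := by
      apply differentiableOn_tsum_of_summable_norm hu
        (fun n => (Differentiable.differentiableOn (by fun_prop)))
        Metric.isOpen_ball
      intro n z hz
      have hz' : z ∈ Metric.closedBall z₀ r := Metric.ball_subset_closedBall hz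
      have : ‖c n * Complex.exp (lam n * z)‖ = ‖c n‖ * Real.exp ((lam n * z).re) := by
        rw [norm_mul, Complex.norm_exp]
      rw [this]
      exact hub n z hz'
    exact ((hdiff.differentiableAt (Metric.ball_mem_nhds z₀ hr)).differentiableWithinAt)
end

section
/- Let Λ ⊆ ℂ be an unbounded set. Then there exists a sequence λ : ℕ → ℂ with λ_n ∈ Λ for all n, satisfying |λ_{n+1}| > 2|λ_n| for every n (in particular |λ_n| → ∞), and such that the set of limit directions at infinity of {λ_n : n ∈ ℕ} equals that of Λ: P({λ_n : n ∈ ℕ}) = P(Λ). -/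
open Complex Filter Topology

/-- The set `P(X)` of limit directions at infinity of an unbounded set `X ⊆ ℂ`:
all `s` with `|s| = 1` such that `s = lim x_k / |x_k|` for some sequence `x_k ∈ X`
with `|x_k| → ∞`. -/
def LimDirs (X : Set ℂ) : Set ℂ :=
  {s : ℂ | ‖s‖ = 1 ∧ ∃ x : ℕ → ℂ, (∀ k, x k ∈ X) ∧
    Tendsto (fun k => ‖x k‖) atTop atTop ∧
    Tendsto (fun k => x k / (‖x k‖ : ℂ)) atTop (𝓝 s)}

noncomputable section SparseAux

namespace SparseAux

/-- A fixed countable dense sequence in `ℂ`. -/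
def q : ℕ → ℂ := TopologicalSpace.denseSeq ℂ

lemma denseRange_q : DenseRange q := TopologicalSpace.denseRange_denseSeq ℂ

/-- The direction condition encoded by step `n`: the direction of `z` is within
`1 / m` of the rational target `q j`, where `(j, m)` is decoded from `n`. -/
def dirCond (n : ℕ) (z : ℂ) : Prop :=
  dist (z / (‖z‖ : ℂ)) (q n.unpair.1.unpair.1) < 1 / (n.unpair.1.unpair.2 : ℝ)

lemma exists_big (Λ : Set ℂ) (hΛ : ¬ Bornology.IsBounded Λ) (r : ℝ) :
    ∃ z, z ∈ Λ ∧ r < ‖z‖ := by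
  by_contra h
  push_neg at h
  exact hΛ (isBounded_iff_forall_norm_le.mpr ⟨r, fun x hx => h x hx⟩)

open Classical in
/-- Pick an element of `Λ` with norm bigger than `max (2‖prev‖) 1`, satisfying the
direction condition of step `n` if at all possible. -/
def pick (Λ : Set ℂ) (hΛ : ¬ Bornology.IsBounded Λ) (n : ℕ) (prev : ℂ) : ℂ :=
  if h : ∃ z, z ∈ Λ ∧ max (2 * ‖prev‖) 1 < ‖z‖ ∧ dirCond n z then h.choose
  else (exists_big Λ hΛ (max (2 * ‖prev‖) 1)).choose

lemma pick_mem (Λ : Set ℂ) (hΛ : ¬ Bornology.IsBounded Λ) (n : ℕ) (prev : ℂ) :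
    pick Λ hΛ n prev ∈ Λ := by
  unfold pick
  split
  · next h => exact h.choose_spec.1
  · exact (exists_big Λ hΛ _).choose_spec.1

lemma pick_norm (Λ : Set ℂ) (hΛ : ¬ Bornology.IsBounded Λ) (n : ℕ) (prev : ℂ) :
    max (2 * ‖prev‖) 1 < ‖pick Λ hΛ n prev‖ := by
  unfold pick
  split
  · next h => exact h.choose_spec.2.1
  · exact (exists_big Λ hΛ _).choose_spec.2

lemma pick_dir (Λ : Set ℂ) (hΛ : ¬ Bornology.IsBounded Λ) (n : ℕ) (prev : ℂ)
    (h : ∀ B : ℝ, ∃ z, z ∈ Λ ∧ B < ‖z‖ ∧ dirCond n z) :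
    dirCond n (pick Λ hΛ n prev) := by
  unfold pick
  rw [dif_pos (h (max (2 * ‖prev‖) 1))]
  exact (h (max (2 * ‖prev‖) 1)).choose_spec.2.2

/-- The sparse sequence. -/
def lam (Λ : Set ℂ) (hΛ : ¬ Bornology.IsBounded Λ) : ℕ → ℂ
  | 0 => pick Λ hΛ 0 0
  | n + 1 => pick Λ hΛ (n + 1) (lam Λ hΛ n)

lemma lam_mem (Λ : Set ℂ) (hΛ : ¬ Bornology.IsBounded Λ) (n : ℕ) :
    lam Λ hΛ n ∈ Λ := by
  cases n <;> exact pick_mem Λ hΛ _ _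

lemma lam_growth (Λ : Set ℂ) (hΛ : ¬ Bornology.IsBounded Λ) (n : ℕ) :
    2 * ‖lam Λ hΛ n‖ < ‖lam Λ hΛ (n + 1)‖ :=
  lt_of_le_of_lt (le_max_left _ _) (pick_norm Λ hΛ (n + 1) (lam Λ hΛ n))

lemma lam_norm_gt (Λ : Set ℂ) (hΛ : ¬ Bornology.IsBounded Λ) (n : ℕ) :
    (2 : ℝ) ^ n < ‖lam Λ hΛ n‖ := by
  induction n with
  | zero =>
    simpa [lam] using lt_of_le_of_lt (le_max_right (2 * ‖(0 : ℂ)‖) 1) (pick_norm Λ hΛ 0 0)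
  | succ n ih =>
    calc (2 : ℝ) ^ (n + 1) = 2 * 2 ^ n := by ring
    _ < 2 * ‖lam Λ hΛ n‖ := by linarith
    _ < ‖lam Λ hΛ (n + 1)‖ := lam_growth Λ hΛ n

lemma lam_dir (Λ : Set ℂ) (hΛ : ¬ Bornology.IsBounded Λ) (n : ℕ)
    (h : ∀ B : ℝ, ∃ z, z ∈ Λ ∧ B < ‖z‖ ∧ dirCond n z) :
    dirCond n (lam Λ hΛ n) := by
  cases n <;> exact pick_dir Λ hΛ _ _ h

end SparseAux

end SparseAux

/-- Every unbounded set `Λ ⊆ ℂ` contains a sparse sequence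
(`|λ_{n+1}| > 2 |λ_n|`, hence `|λ_n| → ∞`) with the same set of limit directions at
infinity as `Λ`. -/
theorem exists_sparse_sequence_with_same_limit_directions (Λ : Set ℂ)
    (hΛ : ¬ Bornology.IsBounded Λ) :
    ∃ lam : ℕ → ℂ, (∀ n, lam n ∈ Λ) ∧
      (∀ n, 2 * ‖lam n‖ < ‖lam (n + 1)‖) ∧
      Tendsto (fun n => ‖lam n‖) atTop atTop ∧
      LimDirs (Set.range lam) = LimDirs Λ := by
  refine ⟨SparseAux.lam Λ hΛ, SparseAux.lam_mem Λ hΛ, SparseAux.lam_growth Λ hΛ, ?_, ?_⟩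
  · exact tendsto_atTop_mono (fun n => (SparseAux.lam_norm_gt Λ hΛ n).le)
      (tendsto_pow_atTop_atTop_of_one_lt one_lt_two)
  · apply Set.Subset.antisymm
    · -- easy inclusion: the range of `lam` is contained in `Λ`
      rintro s ⟨hs1, x, hx, hx2, hx3⟩
      refine ⟨hs1, x, fun k => ?_, hx2, hx3⟩
      obtain ⟨t, ht⟩ := hx k
      rw [← ht]; exact SparseAux.lam_mem Λ hΛ t
    · rintro s ⟨hs1, x, hxΛ, hxnorm, hxdir⟩
      -- for each k, choose a rational close to s
      have hj : ∀ k : ℕ, ∃ j, dist s (SparseAux.q j) < 1 / (2 * (k + 1)) := by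
        intro k
        exact SparseAux.denseRange_q.exists_dist_lt s (by positivity)
      choose j hjs using hj
      -- the steps at which the target (j k, k+1) with precision 1/(k+1) is active
      set N : ℕ → ℕ := fun k => Nat.pair (Nat.pair (j k) (k + 1)) k with hN
      have hNk : ∀ k, k ≤ N k := fun k => Nat.right_le_pair _ _
      have hdecode : ∀ k, (N k).unpair.1.unpair = (j k, k + 1) := by
        intro k; rw [hN]; simp [Nat.unpair_pair]
      -- the target at step N k is always achievable
      have hach : ∀ k, ∀ B : ℝ, ∃ z, z ∈ Λ ∧ B < ‖z‖ ∧ SparseAux.dirCond (N k) z := by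
        intro k B
        have hlt : dist s (SparseAux.q (j k)) < 1 / ((k : ℝ) + 1) := by
          have := hjs k
          have h2 : 1 / (2 * ((k : ℝ) + 1)) < 1 / ((k : ℝ) + 1) := by
            apply one_div_lt_one_div_of_lt <;> nlinarith [Nat.cast_nonneg (α := ℝ) k]
          linarith
        have hev1 : ∀ᶠ t in atTop,
            dist (x t / (‖x t‖ : ℂ)) s < 1 / ((k : ℝ) + 1) - dist s (SparseAux.q (j k)) := by
          have := Metric.tendsto_atTop.mp hxdir (1 / ((k : ℝ) + 1) - dist s (SparseAux.q (j k)))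
            (by linarith)
          obtain ⟨T, hT⟩ := this
          exact eventually_atTop.mpr ⟨T, hT⟩
        have hev2 : ∀ᶠ t in atTop, B < ‖x t‖ := hxnorm.eventually_gt_atTop B
        obtain ⟨t, h1, h2⟩ := (hev1.and hev2).exists
        refine ⟨x t, hxΛ t, h2, ?_⟩
        unfold SparseAux.dirCond
        rw [hdecode k]
        have htri : dist (x t / (‖x t‖ : ℂ)) (SparseAux.q (j k)) ≤
            dist (x t / (‖x t‖ : ℂ)) s + dist s (SparseAux.q (j k)) := dist_triangle _ _ _
        push_cast
        linarith
      -- the subsequence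
      refine ⟨hs1, fun k => SparseAux.lam Λ hΛ (N k), fun k => ⟨N k, rfl⟩, ?_, ?_⟩
      · apply tendsto_atTop_mono (fun k => ?_)
          (tendsto_pow_atTop_atTop_of_one_lt (one_lt_two (α := ℝ)))
        calc (2 : ℝ) ^ k ≤ 2 ^ (N k) := by
              apply pow_le_pow_right₀ (by norm_num) (hNk k)
        _ ≤ ‖SparseAux.lam Λ hΛ (N k)‖ := (SparseAux.lam_norm_gt Λ hΛ (N k)).le
      · rw [tendsto_iff_dist_tendsto_zero]
        refine squeeze_zero (g := fun k : ℕ => 2 * (1 / ((k : ℝ) + 1)))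
          (fun k => dist_nonneg) (fun k => ?_) ?_
        · 
          have hd := SparseAux.lam_dir Λ hΛ (N k) (hach k)
          unfold SparseAux.dirCond at hd
          rw [hdecode k] at hd
          push_cast at hd
          have h2 : 1 / (2 * ((k : ℝ) + 1)) ≤ 1 / ((k : ℝ) + 1) := by
            apply one_div_le_one_div_of_le <;> nlinarith [Nat.cast_nonneg (α := ℝ) k]
          have htri : dist (SparseAux.lam Λ hΛ (N k) / (‖SparseAux.lam Λ hΛ (N k)‖ : ℂ)) s ≤
              dist (SparseAux.lam Λ hΛ (N k) / (‖SparseAux.lam Λ hΛ (N k)‖ : ℂ))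
                (SparseAux.q (j k)) + dist (SparseAux.q (j k)) s := dist_triangle _ _ _
          have h3 : dist (SparseAux.q (j k)) s < 1 / (2 * ((k : ℝ) + 1)) := by
            rw [dist_comm]; exact hjs k
          simp only []
          linarith
        · simpa using (tendsto_one_div_add_atTop_nhds_zero_nat :
            Tendsto (fun n : ℕ => 1 / ((n : ℝ) + 1)) atTop (𝓝 0)).const_mul 2
end

section
/- Let λ : ℕ → ℂ satisfy λ_n ≠ 0 for all n and |λ_{n+1}| > 2|λ_n| for all n. Then the infinite product G_1(z) = ∏_{n=1}^∞ (1 − z/λ_n) converges absolutely and uniformly on every compact subset of ℂ, its limit G_1 is an entire function vanishing exactly at the points λ_n, and G_1 has minimal type with respect to order 1: for every ε > 0 there exists C > 0 such that |G_1(z)| ≤ C·e^{ε|z|} for all z ∈ ℂ. -/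
open Complex Filter Topology

/-- Norm of a finite product of `1 + uₙ` minus one, bounded by real product minus one. -/
lemma prod_one_add_sub_one_norm (F : Finset ℕ) (u : ℕ → ℂ) :
    ‖(∏ n ∈ F, (1 + u n)) - 1‖ ≤ (∏ n ∈ F, (1 + ‖u n‖)) - 1 := by
  classical
  induction F using Finset.induction with
  | empty => simp
  | @insert a F ha ih =>
    have hone : (1 : ℝ) ≤ ∏ n ∈ F, (1 + ‖u n‖) := by
      calc (1 : ℝ) = ∏ _n ∈ F, (1 : ℝ) := by simp
        _ ≤ ∏ n ∈ F, (1 + ‖u n‖) :=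
          Finset.prod_le_prod (fun i _ => zero_le_one)
            (fun i _ => by linarith [norm_nonneg (u i)])
    rw [Finset.prod_insert ha, Finset.prod_insert ha]
    have h1 : (1 + u a) * ∏ n ∈ F, (1 + u n) - 1
        = (1 + u a) * ((∏ n ∈ F, (1 + u n)) - 1) + u a := by ring
    rw [h1]
    calc ‖(1 + u a) * ((∏ n ∈ F, (1 + u n)) - 1) + u a‖
        ≤ ‖1 + u a‖ * ‖(∏ n ∈ F, (1 + u n)) - 1‖ + ‖u a‖ := by
          refine (norm_add_le _ _).trans ?_
          rw [norm_mul]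
      _ ≤ (1 + ‖u a‖) * ((∏ n ∈ F, (1 + ‖u n‖)) - 1) + ‖u a‖ := by
          have h2 : ‖(1 : ℂ) + u a‖ ≤ 1 + ‖u a‖ := (norm_add_le _ _).trans (by simp)
          exact add_le_add_left
            (mul_le_mul h2 ih (norm_nonneg _) (by positivity)) _
      _ = (1 + ‖u a‖) * ∏ n ∈ F, (1 + ‖u n‖) - 1 := by ring

lemma prod_one_add_le_exp (F : Finset ℕ) (u : ℕ → ℝ) (hu : ∀ i, 0 ≤ u i) :
    ∏ i ∈ F, (1 + u i) ≤ Real.exp (∑ i ∈ F, u i) := by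
  rw [Real.exp_sum]
  exact Finset.prod_le_prod (fun i _ => by linarith [hu i])
    (fun i _ => by linarith [Real.add_one_le_exp (u i)])

/-- For a sparse sequence `λₙ ≠ 0`, `|λ_{n+1}| > 2 |λ_n|`, the product
`G₁(z) = ∏ (1 − z/λₙ)` converges absolutely and uniformly on compact subsets of `ℂ`,
its limit is an entire function vanishing exactly at the points `λₙ`, and `G₁` has
minimal type with respect to order `1`. -/
theorem canonical_product_of_sparse_sequence (lam : ℕ → ℂ) (hne : ∀ n, lam n ≠ 0)
    (hsp : ∀ n, 2 * ‖lam n‖ < ‖lam (n + 1)‖) :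
    (∀ z : ℂ, Summable fun n => ‖z / lam n‖) ∧
    (∀ z : ℂ, Multipliable fun n => 1 - z / lam n) ∧
    (∀ K : Set ℂ, IsCompact K →
      TendstoUniformlyOn (fun N z => ∏ n ∈ Finset.range N, (1 - z / lam n))
        (fun z => ∏' n, (1 - z / lam n)) atTop K) ∧
    Differentiable ℂ (fun z => ∏' n, (1 - z / lam n)) ∧
    (∀ z : ℂ, (∏' n, (1 - z / lam n)) = 0 ↔ ∃ n, z = lam n) ∧
    (∀ ε > 0, ∃ C > 0, ∀ z : ℂ,
      ‖∏' n, (1 - z / lam n)‖ ≤ C * Real.exp (ε * ‖z‖)) := by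
  classical
  have hpos : ∀ n, (0:ℝ) < ‖lam n‖ := fun n => norm_pos_iff.mpr (hne n)
  set c : ℕ → ℝ := fun n => ‖lam n‖⁻¹ with hc
  have hcpos : ∀ n, 0 < c n := fun n => inv_pos.mpr (hpos n)
  have hnormdiv : ∀ (z : ℂ) (n : ℕ), ‖z / lam n‖ = ‖z‖ * c n := by
    intro z n
    rw [norm_div, div_eq_mul_inv]
  have hfac : ∀ (z : ℂ) (n : ℕ), ‖1 - z / lam n‖ ≤ 1 + ‖z‖ * c n := by
    intro z n
    calc ‖1 - z / lam n‖ ≤ ‖(1:ℂ)‖ + ‖z / lam n‖ := norm_sub_le _ _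
      _ = 1 + ‖z‖ * c n := by rw [norm_one, hnormdiv]
  have hhalf' : ∀ n, c (n+1) ≤ c n / 2 := by
    intro n
    have h2 : ‖lam (n+1)‖⁻¹ ≤ (2 * ‖lam n‖)⁻¹ := by
      apply inv_anti₀ (by have := hpos n; positivity) (hsp n).le
    calc c (n+1) ≤ (2 * ‖lam n‖)⁻¹ := h2
      _ = c n / 2 := by rw [mul_inv]; simp only [hc]; ring
  have hcle : ∀ n, c n ≤ c 0 * (1/2)^n := by
    intro n
    induction n with
    | zero => simp
    | succ n ih =>
      calc c (n+1) ≤ c n / 2 := hhalf' n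
        _ ≤ (c 0 * (1/2)^n) / 2 := by linarith
        _ = c 0 * (1/2)^(n+1) := by ring
  have hcsum : Summable c :=
    Summable.of_nonneg_of_le (fun n => (hcpos n).le) hcle
      ((summable_geometric_of_lt_one (by norm_num) (by norm_num)).mul_left (c 0))
  have part1 : ∀ z : ℂ, Summable fun n => ‖z / lam n‖ := by
    intro z
    exact (hcsum.mul_left ‖z‖).congr fun n => (hnormdiv z n).symm
  set T : ℕ → ℝ := fun N => ∑' k, c (k + N) with hT
  have hTtend : Tendsto T atTop (𝓝 0) := tendsto_sum_nat_add c
  have hIco : ∀ N M : ℕ, ∑ i ∈ Finset.Ico N M, c i ≤ T N := by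
    intro N M
    rw [Finset.sum_Ico_eq_sum_range]
    have hsub : Summable fun k => c (k + N) := (summable_nat_add_iff N).mpr hcsum
    calc ∑ i ∈ Finset.range (M - N), c (N + i)
        = ∑ i ∈ Finset.range (M - N), c (i + N) :=
          Finset.sum_congr rfl fun i _ => by rw [add_comm]
      _ ≤ T N := Summable.sum_le_tsum _ (fun i _ => (hcpos _).le) hsub
  set S : ℝ := ∑' n, c n with hS
  have hSsum : ∀ M, ∑ i ∈ Finset.range M, c i ≤ S :=
    fun M => Summable.sum_le_tsum _ (fun i _ => (hcpos _).le) hcsum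
  have hhalfN : ∀ z : ℂ, ∃ N, ∀ n, N ≤ n → ‖z / lam n‖ ≤ 1/2 := by
    intro z
    have h0 : Tendsto (fun n => ‖z / lam n‖) atTop (𝓝 0) := (part1 z).tendsto_atTop_zero
    exact eventually_atTop.mp (h0.eventually (eventually_le_nhds (by norm_num)))
  have htne : ∀ (z : ℂ) (n : ℕ), ‖z / lam n‖ ≤ 1/2 → 1 - z / lam n ≠ 0 := by
    intro z n h hzero
    rw [sub_eq_zero] at hzero
    rw [← hzero] at h
    rw [norm_one] at h
    norm_num at h
  have hmem : ∀ {N : ℕ} (n : ↥(Set.Iio N)ᶜ), N ≤ (n : ℕ) := by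
    intro N n
    have h := n.2
    simp only [Set.mem_compl_iff, Set.mem_Iio, not_lt] at h
    exact h
  have hlogsum : ∀ (z : ℂ) (N : ℕ), (∀ n, N ≤ n → ‖z / lam n‖ ≤ 1/2) →
      Summable (fun n : ↥(Set.Iio N)ᶜ => Complex.log (1 - z / lam ↑n)) := by
    intro z N hN
    have hb : Summable (fun n : ↥(Set.Iio N)ᶜ => 3/2 * ‖z / lam ↑n‖) :=
      ((part1 z).mul_left (3/2)).subtype ((Set.Iio N)ᶜ)
    apply Summable.of_norm_bounded hb
    intro n
    have h12 : ‖z / lam ↑n‖ ≤ 1/2 := hN _ (hmem n)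
    have heq : (1:ℂ) - z / lam ↑n = 1 + (-(z / lam ↑n)) := by ring
    rw [heq]
    have := Complex.norm_log_one_add_half_le_self (z := -(z / lam (n:ℕ))) (by
      rw [norm_neg]; exact h12)
    simpa [norm_neg] using this
  have hmultTail : ∀ (z : ℂ) (N : ℕ), (∀ n, N ≤ n → ‖z / lam n‖ ≤ 1/2) →
      Multipliable (fun n : ↥(Set.Iio N)ᶜ => 1 - z / lam ↑n) := by
    intro z N hN
    exact Complex.multipliable_of_summable_log (hlogsum z N hN)
  have hmult : ∀ z : ℂ, Multipliable fun n => 1 - z / lam n := by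
    intro z
    obtain ⟨N, hN⟩ := hhalfN z
    have hfin : Multipliable ((fun n => 1 - z / lam n) ∘ ((↑) : (Set.Iio N) → ℕ)) := by
      have : Finite ↥(Set.Iio N) := (Set.finite_Iio N).to_subtype
      exact Multipliable.of_finite
    exact hfin.mul_compl ((hmultTail z N hN).congr fun n => rfl)
  have hPbound : ∀ (R : ℝ) (M : ℕ) (z : ℂ), ‖z‖ ≤ R →
      ‖∏ n ∈ Finset.range M, (1 - z / lam n)‖ ≤ Real.exp (R * S) := by
    intro R M z hz
    have hR0 : 0 ≤ R := le_trans (norm_nonneg z) hz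
    calc ‖∏ n ∈ Finset.range M, (1 - z / lam n)‖
        = ∏ n ∈ Finset.range M, ‖1 - z / lam n‖ := norm_prod _ _
      _ ≤ ∏ n ∈ Finset.range M, (1 + ‖z‖ * c n) :=
          Finset.prod_le_prod (fun i _ => norm_nonneg _) (fun i _ => hfac z i)
      _ ≤ Real.exp (∑ n ∈ Finset.range M, ‖z‖ * c n) :=
          prod_one_add_le_exp _ _ (fun i => by positivity)
      _ ≤ Real.exp (R * S) := by
          apply Real.exp_le_exp.mpr
          rw [← Finset.mul_sum]
          exact mul_le_mul hz (hSsum M)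
            (Finset.sum_nonneg fun i _ => (hcpos i).le) hR0
  have hQbound : ∀ (R : ℝ) (m n : ℕ) (z : ℂ), ‖z‖ ≤ R →
      ‖(∏ i ∈ Finset.Ico m n, (1 - z / lam i)) - 1‖ ≤ Real.exp (R * T m) - 1 := by
    intro R m n z hz
    have hR0 : 0 ≤ R := le_trans (norm_nonneg z) hz
    have h1 : ∀ i : ℕ, (1:ℂ) - z / lam i = 1 + (-(z / lam i)) := fun i => by ring
    calc ‖(∏ i ∈ Finset.Ico m n, (1 - z / lam i)) - 1‖
        = ‖(∏ i ∈ Finset.Ico m n, (1 + (-(z / lam i)))) - 1‖ := by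
          rw [Finset.prod_congr rfl fun i _ => h1 i]
      _ ≤ (∏ i ∈ Finset.Ico m n, (1 + ‖-(z / lam i)‖)) - 1 :=
          prod_one_add_sub_one_norm _ _
      _ = (∏ i ∈ Finset.Ico m n, (1 + ‖z‖ * c i)) - 1 := by
          congr 1
          exact Finset.prod_congr rfl fun i _ => by rw [norm_neg, hnormdiv]
      _ ≤ Real.exp (∑ i ∈ Finset.Ico m n, ‖z‖ * c i) - 1 := by
          have := prod_one_add_le_exp (Finset.Ico m n) (fun i => ‖z‖ * c i)
            (fun i => by positivity)
          linarith
      _ ≤ Real.exp (R * T m) - 1 := by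
          have hsum : ∑ i ∈ Finset.Ico m n, ‖z‖ * c i ≤ R * T m := by
            rw [← Finset.mul_sum]
            exact mul_le_mul hz (hIco m n)
              (Finset.sum_nonneg fun i _ => (hcpos i).le) hR0
          have := Real.exp_le_exp.mpr hsum
          linarith
  have huc : ∀ K : Set ℂ, IsCompact K →
      TendstoUniformlyOn (fun N z => ∏ n ∈ Finset.range N, (1 - z / lam n))
        (fun z => ∏' n, (1 - z / lam n)) atTop K := by
    intro K hK
    obtain ⟨R₀, hR₀⟩ := hK.isBounded.subset_closedBall 0
    set R : ℝ := max R₀ 0 with hRdef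
    have hKR : ∀ z ∈ K, ‖z‖ ≤ R := by
      intro z hz
      have := hR₀ hz
      rw [Metric.mem_closedBall, dist_zero_right] at this
      exact this.trans (le_max_left _ _)
    have hcauchy : UniformCauchySeqOn
        (fun N z => ∏ n ∈ Finset.range N, (1 - z / lam n)) atTop K := by
      rw [Metric.uniformCauchySeqOn_iff]
      intro ε hε
      have hD : Tendsto (fun N => Real.exp (R*S) * (Real.exp (R * T N) - 1)) atTop (𝓝 0) := by
        have h1 : Tendsto (fun N => R * T N) atTop (𝓝 0) := by
          simpa using hTtend.const_mul R
        have h2 : Tendsto (fun N => Real.exp (R * T N)) atTop (𝓝 1) := by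
          simpa [Function.comp_def] using (Real.continuous_exp.tendsto 0).comp h1
        have h3 := (h2.sub_const 1).const_mul (Real.exp (R*S))
        simpa using h3
      obtain ⟨N₀, hN₀⟩ := eventually_atTop.mp (hD.eventually (eventually_lt_nhds hε))
      refine ⟨N₀, ?_⟩
      have key : ∀ m n : ℕ, N₀ ≤ m → m ≤ n → ∀ z ∈ K,
          dist (∏ i ∈ Finset.range m, (1 - z / lam i))
            (∏ i ∈ Finset.range n, (1 - z / lam i)) < ε := by
        intro m n hm hmn z hz
        rw [dist_eq_norm]
        have hsplit : ∏ i ∈ Finset.range n, (1 - z / lam i)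
            = (∏ i ∈ Finset.range m, (1 - z / lam i)) *
              ∏ i ∈ Finset.Ico m n, (1 - z / lam i) :=
          (Finset.prod_range_mul_prod_Ico _ hmn).symm
        rw [hsplit]
        have heq : (∏ i ∈ Finset.range m, (1 - z / lam i)) -
            (∏ i ∈ Finset.range m, (1 - z / lam i)) * ∏ i ∈ Finset.Ico m n, (1 - z / lam i)
            = -((∏ i ∈ Finset.range m, (1 - z / lam i)) *
              ((∏ i ∈ Finset.Ico m n, (1 - z / lam i)) - 1)) := by ring
        rw [heq, norm_neg, norm_mul]
        calc ‖∏ i ∈ Finset.range m, (1 - z / lam i)‖ *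
              ‖(∏ i ∈ Finset.Ico m n, (1 - z / lam i)) - 1‖
            ≤ Real.exp (R*S) * (Real.exp (R * T m) - 1) :=
              mul_le_mul (hPbound R m z (hKR z hz)) (hQbound R m n z (hKR z hz))
                (norm_nonneg _) (Real.exp_nonneg _)
          _ < ε := hN₀ m hm
      intro m hm n hn z hz
      rcases le_total m n with h | h
      · exact key m n hm h z hz
      · rw [dist_comm]; exact key n m hn h z hz
    exact hcauchy.tendstoUniformlyOn_of_tendsto
      (fun z _ => (hmult z).hasProd.tendsto_prod_nat)
  have hdiffpart : ∀ N : ℕ, Differentiable ℂ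
      (fun z : ℂ => ∏ n ∈ Finset.range N, (1 - z / lam n)) := by
    intro N z
    apply DifferentiableAt.fun_finsetProd
    intro i _
    exact (differentiableAt_const (1:ℂ)).sub (differentiableAt_id.div_const (lam i))
  have hdiff : Differentiable ℂ (fun z => ∏' n, (1 - z / lam n)) := by
    have hloc : TendstoLocallyUniformly
        (fun N z => ∏ n ∈ Finset.range N, (1 - z / lam n))
        (fun z => ∏' n, (1 - z / lam n)) atTop :=
      tendstoLocallyUniformly_iff_forall_isCompact.mpr (fun K hK => huc K hK)
    have hdo : DifferentiableOn ℂ (fun z => ∏' n, (1 - z / lam n)) Set.univ :=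
      (tendstoLocallyUniformlyOn_univ.mpr hloc).differentiableOn
        (Eventually.of_forall fun N => (hdiffpart N).differentiableOn) isOpen_univ
    rw [← differentiableOn_univ]
    exact hdo
  have hzero : ∀ z : ℂ, (∏' n, (1 - z / lam n)) = 0 ↔ ∃ n, z = lam n := by
    intro z
    constructor
    · intro h
      by_contra hcon
      push_neg at hcon
      obtain ⟨N, hN⟩ := hhalfN z
      have hfin : Multipliable ((fun n => 1 - z / lam n) ∘ ((↑) : (Set.Iio N) → ℕ)) := by
        have : Finite ↥(Set.Iio N) := (Set.finite_Iio N).to_subtype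
        exact Multipliable.of_finite
      have htail : Multipliable ((fun n => 1 - z / lam n) ∘ ((↑) : ↥(Set.Iio N)ᶜ → ℕ)) :=
        (hmultTail z N hN).congr fun n => rfl
      have hsplit := Multipliable.tprod_mul_tprod_compl (f := fun n => 1 - z / lam n)
        (s := Set.Iio N) hfin htail
      rw [← hsplit] at h
      rcases mul_eq_zero.mp h with h1 | h2
      · haveI : Fintype ↥(Set.Iio N) := (Set.finite_Iio N).fintype
        rw [tprod_fintype] at h1
        obtain ⟨i, _, hi⟩ := Finset.prod_eq_zero_iff.mp h1
        rw [sub_eq_zero] at hi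
        have hz : z = lam ↑i := by
          have h4 : z / lam ↑i = 1 := hi.symm
          rwa [div_eq_one_iff_eq (hne ↑i)] at h4
        exact hcon ↑i hz
      · have hexp := Complex.cexp_tsum_eq_tprod (f := fun n : ↥(Set.Iio N)ᶜ => 1 - z / lam ↑n)
          (fun n => htne z ↑n (hN _ (hmem n))) (hlogsum z N hN)
        have h3 : cexp _ = ∏' n : ↥(Set.Iio N)ᶜ, (1 - z / lam ↑n) := hexp
        rw [← h3] at h2
        exact Complex.exp_ne_zero _ h2
    · rintro ⟨m, rfl⟩
      have h0 : (1:ℂ) - lam m / lam m = 0 := by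
        rw [div_self (hne m)]; ring
      have hp : HasProd (fun n => 1 - lam m / lam n) 0 := by
        have hev : (fun F : Finset ℕ => ∏ n ∈ F, (1 - lam m / lam n)) =ᶠ[atTop]
            (fun _ => 0) := by
          filter_upwards [eventually_ge_atTop ({m} : Finset ℕ)] with F hF
          exact Finset.prod_eq_zero (hF (Finset.mem_singleton_self m)) h0
        exact (tendsto_congr' hev).mpr tendsto_const_nhds
      exact hp.tprod_eq
  refine ⟨part1, hmult, huc, hdiff, hzero, ?_⟩
  intro ε hε
  obtain ⟨N, hN⟩ := eventually_atTop.mp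
    (hTtend.eventually (eventually_le_nhds (show (0:ℝ) < ε/2 by linarith)))
  set δ : ℝ := ε / (2 * (N+1)) with hδ
  have hδpos : 0 < δ := by positivity
  set C : ℝ := ∏ n ∈ Finset.range N, (1 + c n / δ) with hCdef
  have hCpos : 0 < C := Finset.prod_pos fun i _ => by
    have := hcpos i; positivity
  refine ⟨C, hCpos, fun z => ?_⟩
  have hpart : ∀ M : ℕ, ‖∏ n ∈ Finset.range M, (1 - z / lam n)‖
      ≤ C * Real.exp (ε * ‖z‖) := by
    intro M
    have hfacA : ∀ n : ℕ, 1 + ‖z‖ * c n ≤ (1 + c n / δ) * Real.exp (δ * ‖z‖) := by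
      intro n
      have he := Real.add_one_le_exp (δ * ‖z‖)
      have hCδ : (0:ℝ) ≤ 1 + c n / δ := by have := hcpos n; positivity
      have key := mul_le_mul_of_nonneg_left he hCδ
      have hexp2 : (1 + c n / δ) * (δ * ‖z‖ + 1)
          = δ * ‖z‖ + 1 + c n * ‖z‖ + c n / δ := by
        field_simp
        ring
      have h2 : 0 ≤ δ * ‖z‖ := by positivity
      have h3 : 0 ≤ c n / δ := by have := hcpos n; positivity
      linarith [key, hexp2 ▸ key]
    have h0 : ‖∏ n ∈ Finset.range M, (1 - z / lam n)‖
        ≤ ∏ n ∈ Finset.range M, (1 + ‖z‖ * c n) := by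
      rw [norm_prod]
      exact Finset.prod_le_prod (fun i _ => norm_nonneg _) (fun i _ => hfac z i)
    have h1 : ∏ n ∈ Finset.range M, (1 + ‖z‖ * c n)
        ≤ (∏ n ∈ Finset.range N, (1 + ‖z‖ * c n)) * Real.exp (‖z‖ * T N) := by
      set Kk : ℕ := max M N with hKk
      have hMK : M ≤ Kk := le_max_left _ _
      have hNK : N ≤ Kk := le_max_right _ _
      have e1 : ∏ n ∈ Finset.range M, (1 + ‖z‖ * c n)
          ≤ ∏ n ∈ Finset.range Kk, (1 + ‖z‖ * c n) := by
        rw [← Finset.prod_range_mul_prod_Ico _ hMK]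
        have hone : (1:ℝ) ≤ ∏ n ∈ Finset.Ico M Kk, (1 + ‖z‖ * c n) := by
          calc (1:ℝ) = ∏ _n ∈ Finset.Ico M Kk, (1:ℝ) := by simp
            _ ≤ ∏ n ∈ Finset.Ico M Kk, (1 + ‖z‖ * c n) :=
              Finset.prod_le_prod (fun i _ => zero_le_one)
                (fun i _ => by have := hcpos i; have := norm_nonneg z; nlinarith)
        have hnn : 0 ≤ ∏ n ∈ Finset.range M, (1 + ‖z‖ * c n) :=
          Finset.prod_nonneg fun i _ => by have := hcpos i; have := norm_nonneg z; positivity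
        exact le_mul_of_one_le_right hnn hone
      have e2 : ∏ n ∈ Finset.range Kk, (1 + ‖z‖ * c n)
          = (∏ n ∈ Finset.range N, (1 + ‖z‖ * c n)) *
            ∏ n ∈ Finset.Ico N Kk, (1 + ‖z‖ * c n) :=
        (Finset.prod_range_mul_prod_Ico _ hNK).symm
      have e3 : ∏ n ∈ Finset.Ico N Kk, (1 + ‖z‖ * c n) ≤ Real.exp (‖z‖ * T N) := by
        refine (prod_one_add_le_exp _ _ (fun i => by
          have := hcpos i; have := norm_nonneg z; positivity)).trans ?_
        apply Real.exp_le_exp.mpr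
        rw [← Finset.mul_sum]
        exact mul_le_mul_of_nonneg_left (hIco N Kk) (norm_nonneg z)
      calc ∏ n ∈ Finset.range M, (1 + ‖z‖ * c n)
          ≤ ∏ n ∈ Finset.range Kk, (1 + ‖z‖ * c n) := e1
        _ = (∏ n ∈ Finset.range N, (1 + ‖z‖ * c n)) *
            ∏ n ∈ Finset.Ico N Kk, (1 + ‖z‖ * c n) := e2
        _ ≤ (∏ n ∈ Finset.range N, (1 + ‖z‖ * c n)) * Real.exp (‖z‖ * T N) := by
            apply mul_le_mul_of_nonneg_left e3
            exact Finset.prod_nonneg fun i _ => by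
              have := hcpos i; have := norm_nonneg z; positivity
    have h2 : ∏ n ∈ Finset.range N, (1 + ‖z‖ * c n)
        ≤ C * Real.exp ((ε/2) * ‖z‖) := by
      calc ∏ n ∈ Finset.range N, (1 + ‖z‖ * c n)
          ≤ ∏ n ∈ Finset.range N, ((1 + c n / δ) * Real.exp (δ * ‖z‖)) :=
            Finset.prod_le_prod (fun i _ => by
              have := hcpos i; have := norm_nonneg z; positivity)
              (fun i _ => hfacA i)
        _ = C * Real.exp (δ * ‖z‖) ^ N := by
            rw [Finset.prod_mul_distrib, Finset.prod_const, Finset.card_range]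
        _ = C * Real.exp ((N:ℝ) * (δ * ‖z‖)) := by rw [← Real.exp_nat_mul]
        _ ≤ C * Real.exp ((ε/2) * ‖z‖) := by
            apply mul_le_mul_of_nonneg_left _ hCpos.le
            apply Real.exp_le_exp.mpr
            have hNδ : (N:ℝ) * δ ≤ ε/2 := by
              rw [hδ, ← mul_div_assoc]
              rw [div_le_div_iff₀ (by positivity) (by norm_num : (0:ℝ) < 2)]
              nlinarith [hε.le, mul_nonneg (Nat.cast_nonneg N : (0:ℝ) ≤ (N:ℝ)) hε.le]
            calc (N:ℝ) * (δ * ‖z‖) = ((N:ℝ) * δ) * ‖z‖ := by ring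
              _ ≤ (ε/2) * ‖z‖ := mul_le_mul_of_nonneg_right hNδ (norm_nonneg z)
    have hTN : T N ≤ ε/2 := hN N le_rfl
    calc ‖∏ n ∈ Finset.range M, (1 - z / lam n)‖
        ≤ ∏ n ∈ Finset.range M, (1 + ‖z‖ * c n) := h0
      _ ≤ (∏ n ∈ Finset.range N, (1 + ‖z‖ * c n)) * Real.exp (‖z‖ * T N) := h1
      _ ≤ (C * Real.exp ((ε/2) * ‖z‖)) * Real.exp (‖z‖ * T N) := by
          apply mul_le_mul_of_nonneg_right h2 (Real.exp_nonneg _)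
      _ ≤ C * Real.exp (ε * ‖z‖) := by
          rw [mul_assoc, ← Real.exp_add]
          apply mul_le_mul_of_nonneg_left _ hCpos.le
          apply Real.exp_le_exp.mpr
          have h4 : ‖z‖ * T N ≤ ‖z‖ * (ε/2) :=
            mul_le_mul_of_nonneg_left hTN (norm_nonneg z)
          nlinarith [norm_nonneg z]
  exact le_of_tendsto' ((hmult z).hasProd.tendsto_prod_nat.norm) hpart
end

section
/- Assume conditions (A) and (B) hold, and suppose there exists s_ω ∈ P_M(Λ) such that for every c ∈ ℝ at most one node μ_k satisfies Re(s_ω μ_k) = c (every line l(s_ω, c) contains at most one node of M). Then d_M = 0: the only quasi-polynomial with spectrum in D_M that vanishes at every λ_n is identically zero. -/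
open Complex Filter Topology

noncomputable section

/-- The line `l(s_ω, c) = {z : Re(s_ω z) = c}` contains at most one node `μ_k`. -/
def AtMostOneNodeOnLine (μ : ℕ → ℂ) (sω : ℂ) (c : ℝ) : Prop :=
  ∀ k l : ℕ, (sω * μ k).re = c → (sω * μ l).re = c → k = l

/-- The direction `s_ω ∈ P(Λ)` is coupled with the direction `s_τ ∈ P(M)` via condition (A)
or condition (B) (with the threshold function `κ`). -/
def Coupled (Λ : Set ℂ) (μ : ℕ → ℂ) (κ : ℂ → ℝ) (sτ sω : ℂ) : Prop :=
  sω ∈ LimDirs Λ ∧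
    ((0 < (sω * sτ).re ∧ ∀ c > κ sω, AtMostOneNodeOnLine μ sω c) ∨
     ((sω * sτ).re = 0 ∧ (∀ c > κ sω, AtMostOneNodeOnLine μ sω c) ∧
       ∀ φ : ℕ → ℕ, StrictMono φ →
         Tendsto (fun l => ‖μ (φ l)‖) atTop atTop →
         Tendsto (fun l => μ (φ l) / (‖μ (φ l)‖ : ℂ)) atTop (𝓝 sτ) →
         Tendsto (fun l => (sω * μ (φ l)).re) atTop atTop))

/-- Conditions (A) and (B): every limit direction `s_τ ∈ P(M)` is coupled with some
limit direction `s_ω ∈ P(Λ)`. -/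
def CondAB (Λ : Set ℂ) (μ : ℕ → ℂ) (κ : ℂ → ℝ) : Prop :=
  ∀ sτ ∈ LimDirs (Set.range μ), ∃ sω : ℂ, Coupled Λ μ κ sτ sω

/-- `P_M(Λ)`: the set of limit directions `s_ω ∈ P(Λ)` coupled with some `s_τ ∈ P(M)`. -/
def PMdirs (Λ : Set ℂ) (μ : ℕ → ℂ) (κ : ℂ → ℝ) : Set ℂ :=
  {sω : ℂ | ∃ sτ ∈ LimDirs (Set.range μ), Coupled Λ μ κ sτ sω}

/-- `D_M`: indices of the nodes `μ_k` with `Re(s_ω μ_k) ≤ κ(s_ω)` for all `s_ω ∈ P_M(Λ)`. -/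
def DMset (Λ : Set ℂ) (μ : ℕ → ℂ) (κ : ℂ → ℝ) : Set ℕ :=
  {k : ℕ | ∀ sω ∈ PMdirs Λ μ κ, (sω * μ k).re ≤ κ sω}

/-- Quasi-polynomials with spectrum in `D_M`: finite linear combinations of the monomials
`z^j e^{μ_k z}`, `k ∈ D_M`, `0 ≤ j ≤ m_k − 1`. -/
def IsQuasiPoly (Λ : Set ℂ) (μ : ℕ → ℂ) (m : ℕ → ℕ) (κ : ℂ → ℝ) (P : ℂ → ℂ) : Prop :=
  ∃ (S : Finset ℕ) (a : ℕ → ℕ → ℂ), (∀ k ∈ S, k ∈ DMset Λ μ κ) ∧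
    P = fun z => ∑ k ∈ S, ∑ j ∈ Finset.range (m k), a k j * z ^ j * Complex.exp (μ k * z)


private lemma norm_cexp' (z : ℂ) : ‖Complex.exp z‖ = Real.exp z.re := by
  rw [Complex.norm_exp]

private lemma aux_pow_exp' (j : ℕ) {b : ℝ} (hb : b < 0) :
    Tendsto (fun t : ℝ => t ^ j * Real.exp (b * t)) atTop (𝓝 0) := by
  have hbne : (-b : ℝ) ≠ 0 := by linarith
  have h1 : Tendsto (fun t : ℝ => (-b) * t) atTop atTop :=
    Tendsto.const_mul_atTop (by linarith) tendsto_id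
  have h2 := ((Real.tendsto_pow_mul_exp_neg_atTop_nhds_zero j).comp h1).const_mul (((-b) ^ j)⁻¹)
  rw [mul_zero] at h2
  refine h2.congr fun t => ?_
  show ((-b) ^ j)⁻¹ * (((-b) * t) ^ j * Real.exp (-((-b) * t))) = t ^ j * Real.exp (b * t)
  rw [mul_pow, neg_mul, neg_neg, ← mul_assoc, ← mul_assoc,
    inv_mul_cancel₀ (pow_ne_zero _ hbne), one_mul]

/-- Under conditions (A) and (B), if there is a direction
`s_ω ∈ P_M(Λ)` such that every line `l(s_ω, c)` contains at most one node of `M`,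
then `d_M = 0`: the only quasi-polynomial with spectrum in `D_M` vanishing at every `λ_n`
is identically zero. -/
theorem dM_eq_zero_test (Λ : Set ℂ) (hΛ : ¬ Bornology.IsBounded Λ)
    (μ : ℕ → ℂ) (hinj : Function.Injective μ)
    (hμ : Tendsto (fun k => ‖μ k‖) atTop atTop)
    (m : ℕ → ℕ) (hm : ∀ k, 1 ≤ m k)
    (κ : ℂ → ℝ) (hAB : CondAB Λ μ κ)
    (lam : ℕ → ℂ) (hmem : ∀ n, lam n ∈ Λ)
    (hsp : ∀ n, 2 * ‖lam n‖ < ‖lam (n + 1)‖)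
    (hlim : Tendsto (fun n => ‖lam n‖) atTop atTop)
    (hPdir : LimDirs (Set.range lam) = PMdirs Λ μ κ)
    (hexists : ∃ sω ∈ PMdirs Λ μ κ, ∀ c : ℝ, AtMostOneNodeOnLine μ sω c) :
    ∀ P : ℂ → ℂ, IsQuasiPoly Λ μ m κ P → (∀ n, P (lam n) = 0) → P = 0 := by
  intro P hQP hzero
  obtain ⟨S, a, hSD, hPdef⟩ := hQP
  obtain ⟨sω, hsωP, hline⟩ := hexists
  have hreinj : ∀ k l : ℕ, (sω * μ k).re = (sω * μ l).re → k = l := fun k l h =>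
    hline ((sω * μ l).re) k l h rfl
  by_cases hall : ∀ k ∈ S, ∀ j ∈ Finset.range (m k), a k j = 0
  · funext z
    simp only [hPdef, Pi.zero_apply]
    exact Finset.sum_eq_zero fun k hk => Finset.sum_eq_zero fun j hj => by
      simp [hall k hk j hj]
  exfalso
  push_neg at hall
  have hsωL : sω ∈ LimDirs (Set.range lam) := hPdir ▸ hsωP
  obtain ⟨hs1, x, hxmem, hxnorm, hxdir⟩ := hsωL
  have hPx : ∀ l, P (x l) = 0 := fun l => by
    obtain ⟨n, hn⟩ := hxmem l
    rw [← hn]; exact hzero n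
  set K : Finset ℕ := S.filter (fun k => ∃ j ∈ Finset.range (m k), a k j ≠ 0) with hK
  have hKne : K.Nonempty := by
    obtain ⟨k, hk, j, hj, ha⟩ := hall
    exact ⟨k, Finset.mem_filter.2 ⟨hk, j, hj, ha⟩⟩
  obtain ⟨k₀, hk₀K, hk₀max⟩ := K.exists_max_image (fun k => (sω * μ k).re) hKne
  have hk₀S : k₀ ∈ S := (Finset.mem_filter.1 hk₀K).1
  set J : Finset ℕ := (Finset.range (m k₀)).filter (fun j => a k₀ j ≠ 0) with hJ
  have hJne : J.Nonempty := by
    obtain ⟨-, j, hj, ha⟩ := Finset.mem_filter.1 hk₀K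
    exact ⟨j, Finset.mem_filter.2 ⟨hj, ha⟩⟩
  set j₀ := J.max' hJne with hj₀def
  have hj₀J : j₀ ∈ J := J.max'_mem hJne
  have hj₀m : j₀ ∈ Finset.range (m k₀) := (Finset.mem_filter.1 hj₀J).1
  have ha₀ : a k₀ j₀ ≠ 0 := (Finset.mem_filter.1 hj₀J).2
  have hx_ge : ∀ᶠ l in atTop, (1:ℝ) ≤ ‖x l‖ := hxnorm.eventually_ge_atTop 1
  have hx_ne : ∀ᶠ l in atTop, x l ≠ 0 := by
    filter_upwards [hx_ge] with l hl
    intro h; rw [h, norm_zero] at hl; linarith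
  -- real part along the sequence
  have hre : ∀ c : ℂ, ∀ l, x l ≠ 0 → (c * x l).re = ‖x l‖ * (c * (x l / (‖x l‖:ℂ))).re := by
    intro c l hl
    have hn : (‖x l‖ : ℂ) ≠ 0 := by
      simpa using norm_ne_zero_iff.2 hl
    have hx : (‖x l‖:ℂ) * (x l / (‖x l‖:ℂ)) = x l := by
      rw [mul_comm]; exact div_mul_cancel₀ _ hn
    conv_lhs => rw [← hx]
    rw [mul_left_comm, Complex.re_ofReal_mul]
  -- norm of each ratio term
  have hnr : ∀ k j l, ‖a k j * (x l)^j * Complex.exp (μ k * x l) /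
      ((x l)^j₀ * Complex.exp (μ k₀ * x l))‖
      = ‖a k j‖ * ‖x l‖^j / ‖x l‖^j₀ * Real.exp ((μ k * x l).re - (μ k₀ * x l).re) := by
    intro k j l
    simp only [norm_div, norm_mul, norm_pow, norm_cexp']
    rw [Real.exp_sub]; ring
  -- limit of each term
  have hterm : ∀ k ∈ S, ∀ j ∈ Finset.range (m k),
      Tendsto (fun l => a k j * (x l)^j * Complex.exp (μ k * x l) /
        ((x l)^j₀ * Complex.exp (μ k₀ * x l))) atTop
        (𝓝 (if k = k₀ ∧ j = j₀ then a k₀ j₀ else 0)) := by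
    intro k hk j hj
    by_cases ha : a k j = 0
    · rw [if_neg (by rintro ⟨rfl, rfl⟩; exact ha₀ ha)]
      simp only [ha, zero_mul, zero_div]
      exact tendsto_const_nhds
    have hkK : k ∈ K := Finset.mem_filter.2 ⟨hk, j, hj, ha⟩
    have hrk : (sω * μ k).re ≤ (sω * μ k₀).re := hk₀max k hkK
    by_cases hkk : k = k₀
    · subst hkk
      have hjJ : j ∈ J := Finset.mem_filter.2 ⟨hj, ha⟩
      have hjle : j ≤ j₀ := J.le_max' j hjJ
      by_cases hjj : j = j₀
      · subst hjj
        rw [if_pos ⟨rfl, rfl⟩]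
        refine Filter.Tendsto.congr' ?_ (tendsto_const_nhds : Tendsto (fun _ : ℕ => a k j₀) _ _)
        filter_upwards [hx_ne] with l hl
        have h1 : (x l)^j₀ ≠ 0 := pow_ne_zero _ hl
        have h2 : Complex.exp (μ k * x l) ≠ 0 := Complex.exp_ne_zero _
        rw [mul_assoc, mul_div_assoc, div_self (mul_ne_zero h1 h2), mul_one]
      · rw [if_neg (by tauto)]
        have hjlt : j + 1 ≤ j₀ := lt_of_le_of_ne hjle hjj
        refine squeeze_zero_norm' ?_ (tendsto_const_nhds.div_atTop hxnorm :
          Tendsto (fun l => ‖a k j‖ / ‖x l‖) atTop (𝓝 0))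
        filter_upwards [hx_ge] with l hl
        rw [hnr, sub_self, Real.exp_zero, mul_one]
        have hxpos : (0:ℝ) < ‖x l‖ := by linarith
        rw [div_le_div_iff₀ (by positivity) hxpos]
        calc ‖a k j‖ * ‖x l‖ ^ j * ‖x l‖ = ‖a k j‖ * ‖x l‖ ^ (j + 1) := by ring
          _ ≤ ‖a k j‖ * ‖x l‖ ^ j₀ := by
              have := pow_le_pow_right₀ hl hjlt
              exact mul_le_mul_of_nonneg_left this (norm_nonneg _)
    · rw [if_neg (by tauto)]
      have hlt : (sω * μ k).re < (sω * μ k₀).re :=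
        lt_of_le_of_ne hrk (fun h => hkk (hreinj _ _ h))
      set c : ℂ := μ k - μ k₀ with hc
      have hd : (c * sω).re < 0 := by
        rw [hc, sub_mul, Complex.sub_re, mul_comm (μ k) sω, mul_comm (μ k₀) sω]
        linarith
      set b : ℝ := (c * sω).re / 2 with hb
      have hbneg : b < 0 := by rw [hb]; linarith
      have hdb : (c * sω).re < b := by rw [hb]; linarith
      have he : Tendsto (fun l => (c * (x l / (‖x l‖:ℂ))).re) atTop (𝓝 ((c * sω).re)) :=
        (Complex.continuous_re.tendsto _).comp (hxdir.const_mul c)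
      have heb : ∀ᶠ l in atTop, (c * (x l / (‖x l‖:ℂ))).re < b :=
        he.eventually (gt_mem_nhds hdb)
      have hglim : Tendsto (fun l => ‖a k j‖ * (‖x l‖^j * Real.exp (b * ‖x l‖))) atTop
          (𝓝 (‖a k j‖ * 0)) :=
        ((aux_pow_exp' j hbneg).comp hxnorm).const_mul _
      rw [mul_zero] at hglim
      refine squeeze_zero_norm' ?_ hglim
      filter_upwards [hx_ge, hx_ne, heb] with l hl hne hebl
      rw [hnr]
      have hsub : (μ k * x l).re - (μ k₀ * x l).re = ‖x l‖ * (c * (x l / (‖x l‖:ℂ))).re := by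
        rw [← hre c l hne, hc, sub_mul, Complex.sub_re]
      rw [hsub]
      have h1 : Real.exp (‖x l‖ * (c * (x l / (‖x l‖:ℂ))).re) ≤ Real.exp (b * ‖x l‖) := by
        apply Real.exp_le_exp.2
        nlinarith [norm_nonneg (x l)]
      have h2 : ‖a k j‖ * ‖x l‖^j / ‖x l‖^j₀ ≤ ‖a k j‖ * ‖x l‖^j :=
        div_le_self (by positivity) (by simpa using pow_le_pow_right₀ hl (Nat.zero_le j₀))
      calc ‖a k j‖ * ‖x l‖^j / ‖x l‖^j₀ * Real.exp (‖x l‖ * (c * (x l / (‖x l‖:ℂ))).re)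
          ≤ (‖a k j‖ * ‖x l‖^j) * Real.exp (b * ‖x l‖) := by
            apply mul_le_mul h2 h1 (Real.exp_pos _).le (by positivity)
        _ = ‖a k j‖ * (‖x l‖^j * Real.exp (b * ‖x l‖)) := by ring
  -- sum of limits
  have hsum : Tendsto (fun l => ∑ k ∈ S, ∑ j ∈ Finset.range (m k),
      a k j * (x l)^j * Complex.exp (μ k * x l) / ((x l)^j₀ * Complex.exp (μ k₀ * x l)))
      atTop (𝓝 (∑ k ∈ S, ∑ j ∈ Finset.range (m k),
        if k = k₀ ∧ j = j₀ then a k₀ j₀ else 0)) :=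
    tendsto_finset_sum _ fun k hk => tendsto_finset_sum _ fun j hj => hterm k hk j hj
  have hval : (∑ k ∈ S, ∑ j ∈ Finset.range (m k),
      if k = k₀ ∧ j = j₀ then a k₀ j₀ else 0) = a k₀ j₀ := by
    rw [Finset.sum_eq_single_of_mem k₀ hk₀S (fun k _ hkne =>
      Finset.sum_eq_zero fun j _ => if_neg (by tauto))]
    rw [Finset.sum_eq_single_of_mem j₀ hj₀m (fun j _ hjne => if_neg (by tauto))]
    simp
  rw [hval] at hsum
  have hzero' : ∀ l, (∑ k ∈ S, ∑ j ∈ Finset.range (m k),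
      a k j * (x l)^j * Complex.exp (μ k * x l) / ((x l)^j₀ * Complex.exp (μ k₀ * x l))) = 0 := by
    intro l
    have hP0 : (∑ k ∈ S, ∑ j ∈ Finset.range (m k),
        a k j * (x l)^j * Complex.exp (μ k * x l)) = 0 := by
      have := hPx l
      rw [hPdef] at this
      exact this
    calc (∑ k ∈ S, ∑ j ∈ Finset.range (m k),
        a k j * (x l)^j * Complex.exp (μ k * x l) / ((x l)^j₀ * Complex.exp (μ k₀ * x l)))
        = (∑ k ∈ S, ∑ j ∈ Finset.range (m k),
            a k j * (x l)^j * Complex.exp (μ k * x l)) / ((x l)^j₀ * Complex.exp (μ k₀ * x l)) := by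
          rw [Finset.sum_div]
          exact Finset.sum_congr rfl fun k _ => by rw [Finset.sum_div]
      _ = 0 := by rw [hP0, zero_div]
  rw [show (fun l => ∑ k ∈ S, ∑ j ∈ Finset.range (m k),
      a k j * (x l)^j * Complex.exp (μ k * x l) / ((x l)^j₀ * Complex.exp (μ k₀ * x l)))
      = fun _ => (0:ℂ) from funext hzero'] at hsum
  exact ha₀ (tendsto_nhds_unique hsum tendsto_const_nhds)
end
end

section
/- Let s_ω ∈ ℂ with |s_ω| = 1, and let λ : ℕ → ℂ satisfy |λ_n| → ∞ and λ_n/|λ_n| → s_ω. Let μ : ℕ → ℂ be an arbitrary injective sequence with |μ_k| → ∞. Suppose that for every sequence b : ℕ → ℂ there exist coefficients c_n ∈ ℂ such that the series U(z) = ∑_{n=1}^∞ c_n e^{λ_n z} converges absolutely at every z ∈ ℂ and U(μ_k) = b_k for all k. Then Re(s_ω μ_k) → +∞ as k → ∞ (necessity of the interpolation condition for arbitrary nodes sets). -/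
open Complex Filter Topology

set_option maxHeartbeats 1000000 in
/-- **necessity for arbitrary nodes sets.** Let the exponents `λₙ` tend to
infinity with unique limit direction `s_ω` and let `μ_k` be an arbitrary injective sequence
of nodes with `|μ_k| → ∞`. If every simple interpolation problem `U(μ_k) = b_k` is soluble
by a sum of an everywhere absolutely convergent series of exponentials with exponents `λₙ`,
then `Re(s_ω μ_k) → +∞`. -/
theorem necessity_of_interpolation_condition (sω : ℂ) (hs : ‖sω‖ = 1) (lam : ℕ → ℂ)
    (hlim : Tendsto (fun n => ‖lam n‖) atTop atTop)
    (hdir : Tendsto (fun n => lam n / (‖lam n‖ : ℂ)) atTop (𝓝 sω))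
    (μ : ℕ → ℂ) (hinj : Function.Injective μ)
    (hμ : Tendsto (fun k => ‖μ k‖) atTop atTop)
    (hint : ∀ b : ℕ → ℂ, ∃ c : ℕ → ℂ,
      (∀ z : ℂ, Summable fun n => ‖c n‖ * Real.exp ((lam n * z).re)) ∧
      ∀ k, (∑' n, c n * Complex.exp (lam n * μ k)) = b k) :
    Tendsto (fun k => (sω * μ k).re) atTop atTop := by
  by_contra hcon
  rw [tendsto_atTop] at hcon
  push_neg at hcon
  obtain ⟨C, hC⟩ := hcon
  replace hC : ∃ᶠ x in atTop, ¬ C ≤ (sω * μ x).re := hC.mono fun _ h => not_le.mpr h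
  set u : ℕ → ℂ := fun n => lam n / (‖lam n‖ : ℂ) with hu
  set M : ℝ := max C 0 with hM
  have hM0 : 0 ≤ M := le_max_right _ _
  -- the product `u n * conj sω` tends to 1
  have hprod : Tendsto (fun n => (u n * (starRingEnd ℂ) sω).re) atTop (𝓝 1) := by
    have h1 : sω * (starRingEnd ℂ) sω = 1 := by
      rw [Complex.mul_conj]
      rw [Complex.normSq_eq_norm_sq, hs]
      norm_num
    have h2 : Tendsto (fun n => u n * (starRingEnd ℂ) sω) atTop (𝓝 (1 : ℂ)) := by
      rw [← h1]; exact hdir.mul_const _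
    have h3 := (Complex.continuous_re.tendsto (1 : ℂ)).comp h2
    simp only [Function.comp_def, Complex.one_re] at h3
    exact h3
  -- choose cutoffs N k
  have hEv : ∀ k : ℕ, ∀ᶠ n in atTop,
      ‖u n - sω‖ ≤ 1 / (‖μ k‖ + 1) ∧ 1 / 2 ≤ (u n * (starRingEnd ℂ) sω).re ∧ 1 ≤ ‖lam n‖ := by
    intro k
    have hδ : (0 : ℝ) < 1 / (‖μ k‖ + 1) := by positivity
    have e1 : ∀ᶠ n in atTop, ‖u n - sω‖ ≤ 1 / (‖μ k‖ + 1) := by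
      have := Metric.tendsto_atTop.mp hdir _ hδ
      obtain ⟨N, hN⟩ := this
      refine eventually_atTop.mpr ⟨N, fun n hn => ?_⟩
      have := hN n hn
      rw [Complex.dist_eq] at this
      exact le_of_lt this
    have e2 : ∀ᶠ n in atTop, 1 / 2 ≤ (u n * (starRingEnd ℂ) sω).re :=
      hprod.eventually (eventually_ge_nhds (by norm_num))
    have e3 : ∀ᶠ n in atTop, 1 ≤ ‖lam n‖ := hlim.eventually_ge_atTop 1
    exact e1.and (e2.and e3)
  choose N hN using fun k => eventually_atTop.mp (hEv k)
  set P : ℕ → ℝ := fun k => ∑ n ∈ Finset.range (N k), ‖lam n‖ with hP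
  set G : ℕ → ℝ := fun k => P k * ‖μ k‖ with hG
  have hPnonneg : ∀ k, 0 ≤ P k := fun k =>
    Finset.sum_nonneg fun n _ => norm_nonneg _
  have hGnonneg : ∀ k, 0 ≤ G k := fun k => mul_nonneg (hPnonneg k) (norm_nonneg _)
  set b : ℕ → ℂ := fun k => (((k : ℝ) + 1) * Real.exp (G k) : ℝ) with hb
  obtain ⟨c, hsum, hval⟩ := hint b
  -- the two controlling sums
  have hs0 : Summable fun n => ‖c n‖ := by
    have := hsum 0
    simpa using this
  set z0 : ℂ := ((2 * M + 2 : ℝ) : ℂ) * (starRingEnd ℂ) sω with hz0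
  set S0 : ℝ := ∑' n, ‖c n‖ with hS0
  set SR : ℝ := ∑' n, ‖c n‖ * Real.exp ((lam n * z0).re) with hSR
  have hS0nonneg : 0 ≤ S0 := tsum_nonneg fun n => norm_nonneg _
  have hSRnonneg : 0 ≤ SR := tsum_nonneg fun n => by positivity
  -- the key estimate
  have key : ∀ k : ℕ, (sω * μ k).re ≤ M → (k : ℝ) + 1 ≤ S0 + SR := by
    intro k hk
    -- pointwise tail estimate
    have tail : ∀ n, N k ≤ n → (lam n * μ k).re ≤ (lam n * z0).re := by
      intro n hn
      obtain ⟨hd, hre, h1⟩ := hN k n hn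
      have hpos : (0 : ℝ) < ‖lam n‖ := lt_of_lt_of_le one_pos h1
      have hlamne : ((‖lam n‖ : ℝ) : ℂ) ≠ 0 := Complex.ofReal_ne_zero.mpr hpos.ne'
      have hfac : ((‖lam n‖ : ℝ) : ℂ) * u n = lam n := by
        rw [hu, mul_comm]
        exact div_mul_cancel₀ _ hlamne
      have e1 : (lam n * μ k).re = ‖lam n‖ * (u n * μ k).re := by
        conv_lhs => rw [← hfac, mul_assoc]
        exact Complex.re_ofReal_mul _ _
      have e3 : (lam n * z0).re = ‖lam n‖ * ((2 * M + 2) * (u n * (starRingEnd ℂ) sω).re) := by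
        have heq : lam n * z0 =
            ((‖lam n‖ : ℝ) : ℂ) * (((2 * M + 2 : ℝ) : ℂ) * (u n * (starRingEnd ℂ) sω)) := by
          conv_lhs => rw [← hfac, hz0]
          ring
        rw [heq, Complex.re_ofReal_mul, Complex.re_ofReal_mul]
      have e2 : (u n * μ k).re ≤ M + 1 := by
        have hsplit : u n * μ k = sω * μ k + (u n - sω) * μ k := by ring
        have h2 : ((u n - sω) * μ k).re ≤ 1 := by
          have := Complex.re_le_norm ((u n - sω) * μ k)
          rw [norm_mul] at this
          have h3 : ‖u n - sω‖ * ‖μ k‖ ≤ (1 / (‖μ k‖ + 1)) * ‖μ k‖ :=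
            mul_le_mul_of_nonneg_right hd (norm_nonneg _)
          have h4 : (1 / (‖μ k‖ + 1)) * ‖μ k‖ ≤ 1 := by
            rw [div_mul_eq_mul_div, one_mul, div_le_one (by positivity)]
            linarith [norm_nonneg (μ k)]
          linarith
        rw [hsplit, Complex.add_re]
        linarith
      rw [e1, e3]
      have : (u n * μ k).re ≤ (2 * M + 2) * (u n * (starRingEnd ℂ) sω).re := by
        nlinarith
      exact mul_le_mul_of_nonneg_left this (norm_nonneg _)
    -- norm bound for the interpolating sum
    have hnorm : ∀ z : ℂ, (fun n => ‖c n * Complex.exp (lam n * z)‖) =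
        fun n => ‖c n‖ * Real.exp ((lam n * z).re) := by
      intro z
      funext n
      rw [norm_mul, Complex.norm_exp]
    have hbk : ((k : ℝ) + 1) * Real.exp (G k) ≤
        ∑' n, ‖c n‖ * Real.exp ((lam n * μ k).re) := by
      have h1 : ‖b k‖ ≤ ∑' n, ‖c n‖ * Real.exp ((lam n * μ k).re) := by
        rw [← hval k]
        have := norm_tsum_le_tsum_norm (f := fun n => c n * Complex.exp (lam n * μ k))
          (by rw [hnorm]; exact hsum (μ k))
        rwa [hnorm] at this
      have h2 : ‖b k‖ = ((k : ℝ) + 1) * Real.exp (G k) := by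
        rw [hb]
        simp only [Complex.norm_real, Real.norm_eq_abs]
        rw [_root_.abs_of_nonneg (by positivity)]
      linarith [h1, h2.symm.le]
    -- split the sum
    have hsummu := hsum (μ k)
    have hsplit := (Summable.sum_add_tsum_nat_add (f := fun n => ‖c n‖ * Real.exp ((lam n * μ k).re))
      (N k) hsummu).symm
    -- head estimate
    have hhead : ∑ n ∈ Finset.range (N k), ‖c n‖ * Real.exp ((lam n * μ k).re) ≤
        S0 * Real.exp (G k) := by
      have step : ∀ n ∈ Finset.range (N k),
          ‖c n‖ * Real.exp ((lam n * μ k).re) ≤ ‖c n‖ * Real.exp (G k) := by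
        intro n hn
        have h1 : (lam n * μ k).re ≤ ‖lam n‖ * ‖μ k‖ := by
          have := Complex.re_le_norm (lam n * μ k)
          rwa [norm_mul] at this
        have h2 : ‖lam n‖ ≤ P k := by
          rw [hP]
          exact Finset.single_le_sum (fun i _ => norm_nonneg (lam i)) hn
        have h3 : (lam n * μ k).re ≤ G k := by
          rw [hG]
          exact le_trans h1 (mul_le_mul_of_nonneg_right h2 (norm_nonneg _))
        exact mul_le_mul_of_nonneg_left (Real.exp_le_exp.mpr h3) (norm_nonneg _)
      calc ∑ n ∈ Finset.range (N k), ‖c n‖ * Real.exp ((lam n * μ k).re)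
          ≤ ∑ n ∈ Finset.range (N k), ‖c n‖ * Real.exp (G k) := Finset.sum_le_sum step
        _ = (∑ n ∈ Finset.range (N k), ‖c n‖) * Real.exp (G k) := by
            rw [← Finset.sum_mul]
        _ ≤ S0 * Real.exp (G k) := by
            apply mul_le_mul_of_nonneg_right _ (Real.exp_pos _).le
            exact Summable.sum_le_tsum _ (fun i _ => norm_nonneg _) hs0
    -- tail estimate
    have htail : ∑' n, (‖c (n + N k)‖ * Real.exp ((lam (n + N k) * μ k).re)) ≤ SR := by
      have hsumz0 := hsum z0
      have t1 : ∑' n, (‖c (n + N k)‖ * Real.exp ((lam (n + N k) * μ k).re)) ≤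
          ∑' n, (‖c (n + N k)‖ * Real.exp ((lam (n + N k) * z0).re)) := by
        apply Summable.tsum_le_tsum
        · intro n
          exact mul_le_mul_of_nonneg_left
            (Real.exp_le_exp.mpr (tail (n + N k) (Nat.le_add_left _ _))) (norm_nonneg _)
        · exact (summable_nat_add_iff (N k)).mpr hsummu
        · exact (summable_nat_add_iff (N k)).mpr hsumz0
      have t2 : ∑' n, (‖c (n + N k)‖ * Real.exp ((lam (n + N k) * z0).re)) ≤ SR := by
        rw [hSR, ← Summable.sum_add_tsum_nat_add (f := fun n => ‖c n‖ * Real.exp ((lam n * z0).re))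
          (N k) hsumz0]
        have : 0 ≤ ∑ n ∈ Finset.range (N k), ‖c n‖ * Real.exp ((lam n * z0).re) :=
          Finset.sum_nonneg fun n _ => by positivity
        linarith
      exact le_trans t1 t2
    have total : ((k : ℝ) + 1) * Real.exp (G k) ≤ S0 * Real.exp (G k) + SR := by
      calc ((k : ℝ) + 1) * Real.exp (G k)
          ≤ ∑' n, ‖c n‖ * Real.exp ((lam n * μ k).re) := hbk
        _ = (∑ n ∈ Finset.range (N k), ‖c n‖ * Real.exp ((lam n * μ k).re)) +
            ∑' n, (‖c (n + N k)‖ * Real.exp ((lam (n + N k) * μ k).re)) := hsplit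
        _ ≤ S0 * Real.exp (G k) + SR := add_le_add hhead htail
    have hexp1 : 1 ≤ Real.exp (G k) := Real.one_le_exp (hGnonneg k)
    have : ((k : ℝ) + 1) * Real.exp (G k) ≤ (S0 + SR) * Real.exp (G k) := by
      have : SR ≤ SR * Real.exp (G k) := le_mul_of_one_le_right hSRnonneg hexp1
      nlinarith
    exact le_of_mul_le_mul_right this (Real.exp_pos _)
  -- contradiction: take k large on the bad subsequence
  obtain ⟨k, hkK, hkC⟩ := frequently_atTop.mp hC (⌈S0 + SR⌉₊ + 1)
  have hkM : (sω * μ k).re ≤ M := le_trans (not_le.mp hkC).le (le_max_left _ _)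
  have h1 : (k : ℝ) + 1 ≤ S0 + SR := key k hkM
  have h2 : S0 + SR ≤ (⌈S0 + SR⌉₊ : ℝ) := Nat.le_ceil _
  have h3 : ((⌈S0 + SR⌉₊ + 1 : ℕ) : ℝ) ≤ (k : ℝ) := Nat.cast_le.mpr hkK
  push_cast at h3
  linarith
end

section
/- Let Λ ⊆ ℂ be an unbounded set whose set of limit directions at infinity is the single point {s_ω}, where |s_ω| = 1. Let μ : ℕ → ℂ be an arbitrary injective sequence with |μ_k| → ∞. Suppose that for every sequence b : ℕ → ℂ there exists a complex (Radon) measure σ on ℂ, supported on Λ, such that ∫ e^{Re(λ z)} d|σ|(λ) < ∞ for every z ∈ ℂ and the function U(z) = ∫ e^{λ z} dσ(λ) satisfies U(μ_k) = b_k for all k. Then Re(s_ω μ_k) → +∞ as k → ∞ (necessity of the interpolation condition for interpolation by Laplace transforms of Radon measures on Λ). -/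
open Complex Filter Topology MeasureTheory

/-- If `Λ` has a unique limit direction `sω`, then far away points of `Λ`
have direction close to `sω`. -/
lemma limdirs_unique_far (Λ : Set ℂ) (sω : ℂ) (hdirs : LimDirs Λ = {sω}) :
    ∀ ε : ℝ, 0 < ε → ∃ R : ℝ, 1 ≤ R ∧
      ∀ l ∈ Λ, R ≤ ‖l‖ → ‖l / (‖l‖ : ℂ) - sω‖ ≤ ε := by
  intro ε hε
  by_contra hcon
  push_neg at hcon
  have hx : ∀ n : ℕ, ∃ l, l ∈ Λ ∧ ((n : ℝ) + 1 ≤ ‖l‖) ∧ ε < ‖l / (‖l‖ : ℂ) - sω‖ := by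
    intro n
    obtain ⟨l, hl1, hl2, hl3⟩ := hcon (max ((n : ℝ) + 1) 1) (le_max_right _ _)
    exact ⟨l, hl1, le_trans (le_max_left _ _) hl2, hl3⟩
  choose x hx1 hx2 hx3 using hx
  set d : ℕ → ℂ := fun n => x n / (‖x n‖ : ℂ) with hd
  have hnorm1 : ∀ n, ‖d n‖ = 1 := by
    intro n
    have hpos : (0:ℝ) < ‖x n‖ := by
      have h1 := hx2 n
      have h2 : (0:ℝ) ≤ (n:ℝ) := Nat.cast_nonneg n
      linarith
    have hcn : ‖((‖x n‖ : ℝ) : ℂ)‖ = ‖x n‖ := by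
      rw [Complex.norm_real, Real.norm_eq_abs, _root_.abs_of_nonneg (norm_nonneg _)]
    rw [hd]
    show ‖x n / ((‖x n‖ : ℝ) : ℂ)‖ = 1
    rw [norm_div, hcn, div_self hpos.ne']
  have hdball : ∀ n, d n ∈ Metric.closedBall (0 : ℂ) 1 := by
    intro n
    simp [Metric.mem_closedBall, dist_eq_norm, hnorm1 n]
  obtain ⟨a, _, φ, hφ, hφt⟩ :=
    (ProperSpace.isCompact_closedBall (0 : ℂ) 1).tendsto_subseq hdball
  have ha1 : ‖a‖ = 1 := by
    have h1 : Tendsto (fun n => ‖d (φ n)‖) atTop (𝓝 ‖a‖) := (hφt.norm)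
    have h2 : Tendsto (fun n => ‖d (φ n)‖) atTop (𝓝 1) := by
      simp only [hnorm1]
      exact (tendsto_const_nhds : Tendsto (fun _ : ℕ => (1:ℝ)) atTop (𝓝 1))
    exact tendsto_nhds_unique h1 h2
  have hmem : a ∈ LimDirs Λ := by
    refine ⟨ha1, fun n => x (φ n), fun n => hx1 _, ?_, hφt⟩
    apply tendsto_atTop_mono (fun n => ?_) tendsto_natCast_atTop_atTop
    have h1 : (n : ℝ) ≤ (φ n : ℝ) := by exact_mod_cast hφ.le_apply
    have := hx2 (φ n)
    linarith
  rw [hdirs, Set.mem_singleton_iff] at hmem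
  subst hmem
  obtain ⟨N, hN⟩ := Metric.tendsto_atTop.mp hφt ε hε
  have := hN N le_rfl
  rw [dist_eq_norm] at this
  exact absurd this (not_lt.mpr (hx3 (φ N)).le)

/-- Write `(l*w).re` in terms of the direction of `l`. -/
lemma re_mul_dir (l : ℂ) (hl : ‖l‖ ≠ 0) (w : ℂ) :
    (l * w).re = ‖l‖ * ((l / (‖l‖ : ℂ)) * w).re := by
  have : l / (‖l‖ : ℂ) * w = (l * w) / (‖l‖ : ℂ) := by ring
  rw [this, Complex.div_ofReal_re, mul_div_cancel₀ _ hl]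

/-- **necessity for interpolation by Laplace transforms of measures.**
Let `Λ` be unbounded with the single limit direction `s_ω`, and let `μ_k` be an arbitrary
injective sequence of nodes with `|μ_k| → ∞`. A complex Radon measure `σ` supported on `Λ`
is encoded by its polar decomposition `dσ = h d|σ|`, where `ν = |σ|` is a nonnegative
measure vanishing outside `Λ`, and `h` is a density of modulus `1` `ν`-a.e. If for every
data `b` there is such a measure with `∫ e^{Re(λ z)} d|σ|(λ) < ∞` for all `z` whose Laplace
transform `U(z) = ∫ e^{λ z} dσ(λ)` interpolates `b` at the nodes, then `Re(s_ω μ_k) → +∞`. -/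
theorem necessity_for_laplace_transforms_of_measures (Λ : Set ℂ)
    (hΛ : ¬ Bornology.IsBounded Λ)
    (sω : ℂ) (hs : ‖sω‖ = 1) (hdirs : LimDirs Λ = {sω})
    (μ : ℕ → ℂ) (hinj : Function.Injective μ)
    (hμ : Tendsto (fun k => ‖μ k‖) atTop atTop)
    (hint : ∀ b : ℕ → ℂ, ∃ (ν : Measure ℂ) (h : ℂ → ℂ),
      ν Λᶜ = 0 ∧ (∀ᵐ l ∂ν, ‖h l‖ = 1) ∧
      (∀ z : ℂ, Integrable (fun l => Real.exp ((l * z).re)) ν) ∧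
      ∀ k, (∫ l, h l * Complex.exp (l * μ k) ∂ν) = b k) :
    Tendsto (fun k => (sω * μ k).re) atTop atTop := by
  have hA := limdirs_unique_far Λ sω hdirs
  -- choose cut-off radii ρ k depending only on Λ, μ
  have hρex : ∀ k : ℕ, ∃ R : ℝ, 1 ≤ R ∧
      ∀ l ∈ Λ, R ≤ ‖l‖ → ‖l / (‖l‖ : ℂ) - sω‖ ≤ 1 / (‖μ k‖ + 1) :=
    fun k => hA _ (by positivity)
  choose ρ hρ1 hρ2 using hρex
  -- the data to be interpolated
  set b : ℕ → ℂ := fun k => ((Real.exp ((k : ℝ) + ρ k * ‖μ k‖) : ℝ) : ℂ) with hb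
  obtain ⟨ν, h, hνΛ, hh, hInt, hU⟩ := hint b
  have haeΛ : ∀ᵐ l ∂ν, l ∈ Λ := by
    rw [MeasureTheory.ae_iff]
    exact hνΛ
  -- ν is a finite measure
  haveI hfin : IsFiniteMeasure ν := by
    refine ⟨?_⟩
    have h1 := hInt 0
    simp only [mul_zero, Complex.zero_re, Real.exp_zero] at h1
    rcases (integrable_const_iff.mp h1) with h | h
    · norm_num at h
    · exact h.measure_univ_lt_top
  -- exponential moments of ν are all finite
  have hmom : ∀ t : ℝ, Integrable (fun l => Real.exp (t * ‖l‖)) ν := by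
    intro t
    obtain ⟨R, hR1, hR2⟩ := hA (1/2) one_half_pos
    have hz := hInt (((2 * |t| : ℝ) : ℂ) * (starRingEnd ℂ) sω)
    refine Integrable.mono'
      ((integrable_const (Real.exp (|t| * R))).add hz) ?_ ?_
    · exact (Real.continuous_exp.comp (continuous_const.mul continuous_norm)).aestronglyMeasurable
    · filter_upwards [haeΛ] with l hl
      simp only [Pi.add_apply]
      rw [Real.norm_eq_abs, _root_.abs_of_pos (Real.exp_pos _)]
      rcases le_total ‖l‖ R with h1 | h1
      · have : Real.exp (t * ‖l‖) ≤ Real.exp (|t| * R) := by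
          apply Real.exp_le_exp.2
          calc t * ‖l‖ ≤ |t| * ‖l‖ := by
                exact mul_le_mul_of_nonneg_right (le_abs_self t) (norm_nonneg l)
            _ ≤ |t| * R := mul_le_mul_of_nonneg_left h1 (abs_nonneg t)
        exact le_trans this (le_add_of_nonneg_right (Real.exp_pos _).le)
      · -- far case
        have hl0 : ‖l‖ ≠ 0 := by
          have : (0:ℝ) < ‖l‖ := lt_of_lt_of_le (by linarith) h1
          exact this.ne'
        have hdir := hR2 l hl h1
        set dl : ℂ := l / (‖l‖ : ℂ) with hdl
        have hkey : (1/2 : ℝ) ≤ (dl * (starRingEnd ℂ) sω).re := by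
          have hsplit : dl * (starRingEnd ℂ) sω
              = sω * (starRingEnd ℂ) sω + (dl - sω) * (starRingEnd ℂ) sω := by ring
          have h2 : (sω * (starRingEnd ℂ) sω).re = 1 := by
            rw [Complex.mul_conj]
            simp [Complex.normSq_eq_norm_sq, hs]
          have h3 : ((dl - sω) * (starRingEnd ℂ) sω).re ≥ -(1/2 : ℝ) := by
            have habs : ‖(dl - sω) * (starRingEnd ℂ) sω‖ ≤ 1/2 := by
              rw [norm_mul]
              calc ‖dl - sω‖ * ‖(starRingEnd ℂ) sω‖ = ‖dl - sω‖ := by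
                    rw [RCLike.norm_conj, hs, mul_one]
                _ ≤ 1/2 := hdir
            have := neg_abs_le ((dl - sω) * (starRingEnd ℂ) sω).re
            have h4 : |((dl - sω) * (starRingEnd ℂ) sω).re| ≤ 1/2 :=
              le_trans (Complex.abs_re_le_norm _) habs
            linarith [abs_le.mp h4]
          rw [hsplit, Complex.add_re, h2]
          linarith
        have hRe : |t| * ‖l‖ ≤ (l * (((2 * |t| : ℝ) : ℂ) * (starRingEnd ℂ) sω)).re := by
          have e1 : l * (((2 * |t| : ℝ) : ℂ) * (starRingEnd ℂ) sω)
              = ((2 * |t| : ℝ) : ℂ) * (l * (starRingEnd ℂ) sω) := by ring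
          rw [e1, Complex.re_ofReal_mul, re_mul_dir l hl0]
          have h5 : (1/2 : ℝ) * ‖l‖ ≤ (dl * (starRingEnd ℂ) sω).re * ‖l‖ := by
            exact mul_le_mul_of_nonneg_right hkey (norm_nonneg l)
          calc |t| * ‖l‖ = (2 * |t|) * ((1/2) * ‖l‖) := by ring
            _ ≤ (2 * |t|) * ((dl * (starRingEnd ℂ) sω).re * ‖l‖) := by
                apply mul_le_mul_of_nonneg_left h5 (by positivity)
            _ = 2 * |t| * (‖l‖ * (dl * (starRingEnd ℂ) sω).re) := by ring
        have : Real.exp (t * ‖l‖)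
            ≤ Real.exp ((l * (((2 * |t| : ℝ) : ℂ) * (starRingEnd ℂ) sω)).re) := by
          apply Real.exp_le_exp.2
          calc t * ‖l‖ ≤ |t| * ‖l‖ :=
                mul_le_mul_of_nonneg_right (le_abs_self t) (norm_nonneg l)
            _ ≤ _ := hRe
        exact le_trans this (le_add_of_nonneg_left (Real.exp_pos _).le)
  -- suppose the conclusion fails
  by_contra hcon
  rw [tendsto_atTop] at hcon
  push_neg at hcon
  obtain ⟨C, hC⟩ := hcon
  set C₀ : ℝ := max C 0 with hC₀
  set V : ℝ := (ν Set.univ).toReal with hV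
  set M : ℝ := ∫ l, Real.exp ((C₀ + 1) * ‖l‖) ∂ν with hM
  have hVnn : 0 ≤ V := ENNReal.toReal_nonneg
  have hMnn : 0 ≤ M := integral_nonneg (fun l => (Real.exp_pos _).le)
  -- the key estimate for "bad" indices k
  have key : ∀ k : ℕ, (sω * μ k).re < C → Real.exp (k : ℝ) ≤ V + M := by
    intro k hk
    have step1 : ‖b k‖ = Real.exp ((k : ℝ) + ρ k * ‖μ k‖) := by
      simp only [hb, Complex.norm_real, Real.norm_eq_abs]
      exact _root_.abs_of_pos (Real.exp_pos _)
    have step2 : ‖∫ l, h l * Complex.exp (l * μ k) ∂ν‖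
        ≤ ∫ l, ‖h l * Complex.exp (l * μ k)‖ ∂ν :=
      norm_integral_le_integral_norm _
    have step3 : (∫ l, ‖h l * Complex.exp (l * μ k)‖ ∂ν)
        = ∫ l, Real.exp ((l * μ k).re) ∂ν := by
      apply integral_congr_ae
      filter_upwards [hh] with l hl
      rw [norm_mul, hl, one_mul, Complex.norm_exp]
    have step4 : (∫ l, Real.exp ((l * μ k).re) ∂ν)
        ≤ ∫ l, (Real.exp (ρ k * ‖μ k‖) + Real.exp ((C₀ + 1) * ‖l‖)) ∂ν := by
      apply integral_mono_ae (hInt (μ k)) ((integrable_const _).add (hmom _))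
      filter_upwards [haeΛ] with l hl
      rcases le_total ‖l‖ (ρ k) with h1 | h1
      · -- near part
        have : (l * μ k).re ≤ ρ k * ‖μ k‖ := by
          calc (l * μ k).re ≤ ‖l * μ k‖ :=
                Complex.re_le_norm _
            _ = ‖l‖ * ‖μ k‖ := norm_mul _ _
            _ ≤ ρ k * ‖μ k‖ := mul_le_mul_of_nonneg_right h1 (norm_nonneg _)
        exact le_trans (Real.exp_le_exp.2 this) (le_add_of_nonneg_right (Real.exp_pos _).le)
      · -- far part
        have hl0 : ‖l‖ ≠ 0 := by
          have : (0:ℝ) < ‖l‖ := lt_of_lt_of_le (lt_of_lt_of_le one_pos (hρ1 k)) h1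
          exact this.ne'
        have hdir := hρ2 k l hl h1
        set dl : ℂ := l / (‖l‖ : ℂ) with hdl
        have hre : (dl * μ k).re ≤ C₀ + 1 := by
          have hsplit : dl * μ k = sω * μ k + (dl - sω) * μ k := by ring
          have h2 : ((dl - sω) * μ k).re ≤ 1 := by
            calc ((dl - sω) * μ k).re ≤ ‖(dl - sω) * μ k‖ :=
                  Complex.re_le_norm _
              _ = ‖dl - sω‖ * ‖μ k‖ := norm_mul _ _
              _ ≤ (1 / (‖μ k‖ + 1)) * ‖μ k‖ :=
                  mul_le_mul_of_nonneg_right hdir (norm_nonneg _)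
              _ ≤ 1 := by
                  rw [div_mul_eq_mul_div, one_mul, div_le_one (by positivity)]
                  linarith
          rw [hsplit, Complex.add_re]
          have : (sω * μ k).re ≤ C₀ := le_trans hk.le (le_max_left _ _)
          linarith
        have : (l * μ k).re ≤ (C₀ + 1) * ‖l‖ := by
          rw [re_mul_dir l hl0, ← hdl]
          calc ‖l‖ * (dl * μ k).re ≤ ‖l‖ * (C₀ + 1) :=
                mul_le_mul_of_nonneg_left hre (norm_nonneg _)
            _ = (C₀ + 1) * ‖l‖ := mul_comm _ _
        exact le_trans (Real.exp_le_exp.2 this) (le_add_of_nonneg_left (Real.exp_pos _).le)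
    have step5 : (∫ l, (Real.exp (ρ k * ‖μ k‖) + Real.exp ((C₀ + 1) * ‖l‖)) ∂ν)
        = Real.exp (ρ k * ‖μ k‖) * V + M := by
      rw [integral_add (integrable_const _) (hmom _), integral_const]
      simp [hV, hM, smul_eq_mul, mul_comm, Measure.real]
    have hchain : Real.exp ((k : ℝ) + ρ k * ‖μ k‖)
        ≤ Real.exp (ρ k * ‖μ k‖) * V + M := by
      calc Real.exp ((k : ℝ) + ρ k * ‖μ k‖) = ‖b k‖ := step1.symm
        _ = ‖∫ l, h l * Complex.exp (l * μ k) ∂ν‖ := by rw [hU k]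
        _ ≤ _ := le_trans step2 (le_of_eq step3)
        _ ≤ _ := le_trans step4 (le_of_eq step5)
    have hE1 : (1:ℝ) ≤ Real.exp (ρ k * ‖μ k‖) := by
      rw [← Real.exp_zero]
      apply Real.exp_le_exp.2
      have hρnn : (0:ℝ) ≤ ρ k := le_trans zero_le_one (hρ1 k)
      exact mul_nonneg hρnn (norm_nonneg _)
    rw [Real.exp_add] at hchain
    set A := Real.exp (ρ k * ‖μ k‖)
    have hApos : 0 < A := Real.exp_pos _
    -- exp k * A ≤ A * V + M ≤ A * (V + M), divide by A
    have h6 : Real.exp (k : ℝ) * A ≤ A * (V + M) := by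
      calc Real.exp (k : ℝ) * A ≤ A * V + M := hchain
        _ ≤ A * V + A * M := by nlinarith
        _ = A * (V + M) := by ring
    have := le_of_mul_le_mul_right (by linarith [h6] : Real.exp (k : ℝ) * A ≤ (V + M) * A) hApos
    exact this
  -- derive the contradiction
  obtain ⟨k, hkN, hkbad⟩ := Filter.frequently_atTop.mp hC ⌈V + M⌉₊
  have h7 : Real.exp (k : ℝ) ≤ V + M := key k hkbad
  have h8 : V + M < Real.exp (k : ℝ) := by
    have h9 : V + M ≤ (⌈V + M⌉₊ : ℝ) := Nat.le_ceil _
    have h10 : ((⌈V + M⌉₊ : ℕ) : ℝ) ≤ (k : ℝ) := by exact_mod_cast hkN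
    have := Real.add_one_le_exp (k : ℝ)
    linarith
  linarith
end
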